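/- arXiv:1907.02405 — 8 statements merged into one kernel-verified Lean document; each statement's English description precedes it below -/
import Mathlib

section
/- Every sub-problem (L_{u,v}) is a relaxation of (L): any feasible production plan of (L) induces a feasible plan of (L_{u,v}) whose cost in (L_{u,v}) is at most the cost of the original plan in (L). Consequently the optimal cost of (L_{u,v}) is a lower bound on the optimal cost of (L). -/
/-- Feasibility of a production plan `(X, I)` for the capacitated single-item
lot-sizing problem over periods `1..T` with demands `d`, production capacities
`ahi` and inventory capacities `bhi` (no lower bounds), `I 0 = I T = 0`. -/
def Feasible (T : ℕ) (d ahi bhi : ℕ → ℕ) (X I : ℕ → ℕ) : Prop :=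
  I 0 = 0 ∧ I T = 0 ∧
  ∀ t ∈ Finset.Icc 1 T, I (t - 1) + X t = d t + I t ∧ X t ≤ ahi t ∧ I t ≤ bhi t

/-- Total cost `Σ (p_t X_t + h_t I_t + s_t·[X_t > 0])`. -/
def planCost (T : ℕ) (p h s : ℕ → ℕ) (X I : ℕ → ℕ) : ℕ :=
  ∑ t ∈ Finset.Icc 1 T, (p t * X t + h t * I t + if 0 < X t then s t else 0)

/-- Demands of sub-problem `(L_{u,v})`: zero outside `[u, v]`. -/
def subd (u v : ℕ) (d : ℕ → ℕ) : ℕ → ℕ := fun t => if t ∈ Finset.Icc u v then d t else 0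

/-- Setup costs of sub-problem `(L_{u,v})`: zero outside `[u, v]`. -/
def subs (u v : ℕ) (s : ℕ → ℕ) : ℕ → ℕ := fun t => if t ∈ Finset.Icc u v then s t else 0


/-- Every sub-problem `(L_{u,v})` is a relaxation of `(L)`: any feasible plan of
`(L)` induces a feasible plan of `(L_{u,v})` of no greater cost; consequently any
lower bound on the optimal cost of `(L_{u,v})` (in particular its optimal cost)
is a lower bound on the cost of any feasible plan of `(L)`. -/
theorem subproblem_relaxation
    (T u v : ℕ) (hu : 1 ≤ u) (huv : u < v) (hv : v ≤ T)
    (d p h s ahi bhi : ℕ → ℕ)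
    (X I : ℕ → ℕ) (hXI : Feasible T d ahi bhi X I) :
    (∃ X' I' : ℕ → ℕ, Feasible T (subd u v d) ahi bhi X' I' ∧
      planCost T p h (subs u v s) X' I' ≤ planCost T p h s X I) ∧
    (∀ c : ℕ, (∀ X' I' : ℕ → ℕ, Feasible T (subd u v d) ahi bhi X' I' →
        c ≤ planCost T p h (subs u v s) X' I') →
      c ≤ planCost T p h s X I) := by
  obtain ⟨hI0, hIT, hflow⟩ := hXI
  set Dc : ℕ → ℕ := fun t => ∑ k ∈ Finset.Icc 1 t, d k with hDc
  set Yc : ℕ → ℕ := fun t => ∑ k ∈ Finset.Icc 1 t, X k with hYc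
  have hDstep : ∀ t, Dc (t + 1) = Dc t + d (t + 1) := by
    intro t; simp [hDc, Finset.sum_Icc_succ_top (Nat.le_add_left 1 t)]
  have hYstep : ∀ t, Yc (t + 1) = Yc t + X (t + 1) := by
    intro t; simp [hYc, Finset.sum_Icc_succ_top (Nat.le_add_left 1 t)]
  have hDmono : ∀ a b : ℕ, a ≤ b → Dc a ≤ Dc b := by
    intro a b hab
    exact Finset.sum_le_sum_of_subset (Finset.Icc_subset_Icc_right hab)
  have hbal : ∀ t, t ≤ T → Yc t = Dc t + I t := by
    intro t
    induction t with
    | zero => intro _; simp [hDc, hYc, hI0]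
    | succ n ih =>
      intro hn
      obtain ⟨hf, -, -⟩ := hflow (n + 1) (Finset.mem_Icc.mpr ⟨Nat.succ_le_succ (Nat.zero_le n), hn⟩)
      simp only [Nat.add_sub_cancel] at hf
      have hn' := ih (by omega)
      rw [hDstep, hYstep]; omega
  set Y' : ℕ → ℕ := fun t => min (Yc t) (Dc v) - Dc (u - 1) with hY'
  set D2 : ℕ → ℕ := fun t => min (Dc t) (Dc v) - Dc (u - 1) with hD2
  set X' : ℕ → ℕ := fun t => Y' t - Y' (t - 1) with hX'
  set I' : ℕ → ℕ := fun t => Y' t - D2 t with hI'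
  have key : ∀ t, 1 ≤ t → t ≤ T →
      D2 (t - 1) + subd u v d t = D2 t ∧ Y' (t - 1) ≤ Y' t ∧ D2 (t - 1) ≤ Y' (t - 1) ∧
      D2 t ≤ Y' t ∧ X' t ≤ X t ∧ I' t ≤ I t := by
    intro t ht1 htT
    have ha := hbal t htT
    have hb := hbal (t - 1) (by omega)
    obtain ⟨hf, -, -⟩ := hflow t (Finset.mem_Icc.mpr ⟨ht1, htT⟩)
    have ht' : t - 1 + 1 = t := by omega
    have hd := hDstep (t - 1); rw [ht'] at hd
    have hx := hYstep (t - 1); rw [ht'] at hx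
    have hUV : Dc (u - 1) ≤ Dc v := hDmono _ _ (by omega)
    simp only [hX', hI', hY', hD2, subd, Finset.mem_Icc]
    rcases Nat.lt_or_ge t u with hcase | hcase
    · have h1 : Dc t ≤ Dc (u - 1) := hDmono _ _ (by omega)
      have h2 : Dc (t - 1) ≤ Dc (u - 1) := hDmono _ _ (by omega)
      simp only [Nat.min_def]; split_ifs <;> omega
    · rcases le_or_gt t v with hcase2 | hcase2
      · have h1 : Dc (u - 1) ≤ Dc (t - 1) := hDmono _ _ (by omega)
        have h2 : Dc t ≤ Dc v := hDmono _ _ hcase2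
        simp only [Nat.min_def]; split_ifs <;> omega
      · have h1 : Dc v ≤ Dc (t - 1) := hDmono _ _ (by omega)
        simp only [Nat.min_def]; split_ifs <;> omega
  have hY'0 : Y' 0 = 0 := by
    have : Yc 0 = 0 := by simp [hYc]
    simp [hY', this]
  have hI'0 : I' 0 = 0 := by
    have h0 : Dc 0 = 0 := by simp [hDc]
    have hy0 : Yc 0 = 0 := by simp [hYc]
    simp [hI', hY', hD2, h0, hy0]
  have hI'T : I' T = 0 := by
    have ha := hbal T le_rfl
    have h1 : Dc v ≤ Dc T := hDmono _ _ hv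
    simp only [hI', hY', hD2, Nat.min_def]
    split_ifs <;> omega
  have hfeas : Feasible T (subd u v d) ahi bhi X' I' := by
    refine ⟨hI'0, hI'T, ?_⟩
    intro t ht
    rw [Finset.mem_Icc] at ht
    obtain ⟨hk1, hk2, hk3, hk4, hk5, hk6⟩ := key t ht.1 ht.2
    obtain ⟨-, hXa, hIb⟩ := hflow t (Finset.mem_Icc.mpr ht)
    refine ⟨?_, le_trans hk5 hXa, le_trans hk6 hIb⟩
    simp only [hX', hI']
    omega
  have hcost : planCost T p h (subs u v s) X' I' ≤ planCost T p h s X I := by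
    apply Finset.sum_le_sum
    intro t ht
    rw [Finset.mem_Icc] at ht
    obtain ⟨-, -, -, -, hk5, hk6⟩ := key t ht.1 ht.2
    have h1 : p t * X' t ≤ p t * X t := Nat.mul_le_mul_left _ hk5
    have h2 : h t * I' t ≤ h t * I t := Nat.mul_le_mul_left _ hk6
    have h3 : (if 0 < X' t then subs u v s t else 0) ≤ (if 0 < X t then s t else 0) := by
      split_ifs with ha hb
      · simp only [subs]; split_ifs <;> omega
      · omega
      · exact Nat.zero_le _
      · exact le_refl 0
    exact Nat.add_le_add (Nat.add_le_add h1 h2) h3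
  refine ⟨⟨X', I', hfeas, hcost⟩, fun c hc => le_trans (hc X' I' hfeas) hcost⟩
end

section
/- In any feasible solution of (L_{u,v}), the solution obtained by setting inventory to 0 after period v (i.e., producing nothing after v and storing nothing at the end of periods v, v+1, ..., T) is feasible and has cost no greater than the original solution. Hence (L_{u,v}) admits an optimal solution with I_v = 0. -/
/-- In any feasible solution of `(L_{u,v})`, truncating after `v` (producing
nothing after `v` and storing nothing at the end of periods `v, v+1, ..., T`)
yields a feasible solution of no greater cost with `I v = 0`; hence `(L_{u,v})`
admits an optimal solution with `I v = 0`. -/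
theorem subproblem_zero_inventory_after_v
    (T u v : ℕ) (hu : 1 ≤ u) (huv : u < v) (hv : v ≤ T)
    (d p h s ahi bhi : ℕ → ℕ)
    (X I : ℕ → ℕ)
    (hXI : Feasible T (subd u v d) ahi bhi X I) :
    (Feasible T (subd u v d) ahi bhi
        (fun t => if v < t then 0 else X t) (fun t => if v ≤ t then 0 else I t) ∧
      (fun t : ℕ => if v ≤ t then 0 else I t) v = 0 ∧
      planCost T p h (subs u v s)
          (fun t => if v < t then 0 else X t) (fun t => if v ≤ t then 0 else I t) ≤
        planCost T p h (subs u v s) X I) ∧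
    ∃ X' I' : ℕ → ℕ, Feasible T (subd u v d) ahi bhi X' I' ∧ I' v = 0 ∧
      ∀ X'' I'' : ℕ → ℕ, Feasible T (subd u v d) ahi bhi X'' I'' →
        planCost T p h (subs u v s) X' I' ≤ planCost T p h (subs u v s) X'' I'' := by
  have main : ∀ X I : ℕ → ℕ, Feasible T (subd u v d) ahi bhi X I →
      Feasible T (subd u v d) ahi bhi
        (fun t => if v < t then 0 else X t) (fun t => if v ≤ t then 0 else I t) ∧
      (fun t : ℕ => if v ≤ t then 0 else I t) v = 0 ∧
      planCost T p h (subs u v s)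
          (fun t => if v < t then 0 else X t) (fun t => if v ≤ t then 0 else I t) ≤
        planCost T p h (subs u v s) X I := by
    intro X I hXI
    obtain ⟨h0, hT, hflow⟩ := hXI
    have hd : ∀ t, v < t → subd u v d t = 0 := by
      intro t ht; simp only [subd, Finset.mem_Icc, ite_eq_right_iff, and_imp]
      omega
    have hIaux : ∀ n t, t + n = T → v ≤ t → I t = 0 := by
      intro n
      induction n with
      | zero =>
        intro t ht _
        have : t = T := by omega
        rw [this]; exact hT
      | succ n ih =>
        intro t ht hvt
        obtain ⟨hf, -, -⟩ := hflow (t + 1) (by simp [Finset.mem_Icc]; omega)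
        have hI1 : I (t + 1) = 0 := ih (t + 1) (by omega) (by omega)
        rw [hd (t + 1) (by omega), hI1] at hf
        simp only [Nat.add_sub_cancel] at hf
        omega
    have hIz : ∀ t, v ≤ t → t ≤ T → I t = 0 := fun t h1 h2 =>
      hIaux (T - t) t (by omega) h1
    have hXz : ∀ t, v < t → t ≤ T → X t = 0 := by
      intro t ht htT
      obtain ⟨hf, -, -⟩ := hflow t (by simp [Finset.mem_Icc]; omega)
      have h1 := hIz t (by omega) htT
      have h2 := hIz (t - 1) (by omega) (by omega)
      rw [hd t ht] at hf
      omega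
    have eI : ∀ t, t ≤ T → (if v ≤ t then 0 else I t) = I t := by
      intro t ht
      split
      · exact (hIz t ‹_› ht).symm
      · rfl
    have eX : ∀ t, t ≤ T → (if v < t then 0 else X t) = X t := by
      intro t ht
      split
      · exact (hXz t ‹_› ht).symm
      · rfl
    refine ⟨⟨?_, ?_, ?_⟩, ?_, ?_⟩
    · have hv0 : ¬ v ≤ 0 := by omega
      simp [hv0, h0]
    · simp [hT]
    · intro t ht
      simp only [Finset.mem_Icc] at ht
      simp only [eX t ht.2, eI t ht.2, eI (t - 1) (show t - 1 ≤ T by omega)]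
      exact hflow t (by simp [Finset.mem_Icc]; omega)
    · simp
    · apply le_of_eq
      unfold planCost
      apply Finset.sum_congr rfl
      intro t ht
      simp only [Finset.mem_Icc] at ht
      simp only [eX t ht.2, eI t ht.2]
  refine ⟨main X I hXI, ?_⟩
  set S : Set ℕ := {c | ∃ X'' I'', Feasible T (subd u v d) ahi bhi X'' I'' ∧
      planCost T p h (subs u v s) X'' I'' = c} with hSdef
  have hS : S.Nonempty := ⟨_, X, I, hXI, rfl⟩
  obtain ⟨X0, I0, hfeas0, hcost0⟩ := Nat.sInf_mem hS
  obtain ⟨hf', hv0, hle⟩ := main X0 I0 hfeas0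
  refine ⟨_, _, hf', hv0, ?_⟩
  intro X'' I'' hfeas''
  calc planCost T p h (subs u v s) (fun t => if v < t then 0 else X0 t)
        (fun t => if v ≤ t then 0 else I0 t) ≤ planCost T p h (subs u v s) X0 I0 := hle
    _ = sInf S := hcost0
    _ ≤ _ := Nat.sInf_le ⟨X'', I'', hfeas'', rfl⟩
end

section
/- For the integer flow feasibility problem (F) on a directed graph with integer lower and upper arc capacities and node balances in {−1, 0, 1}, bound consistency implies range consistency: if for an arc (i0, j0) there exist integer feasible flows x' and x'' with x'_{i0 j0} = l_{i0 j0} and x''_{i0 j0} = u_{i0 j0}, then for every integer k with l_{i0 j0} ≤ k ≤ u_{i0 j0} there exists an integer feasible flow x with x_{i0 j0} = k. -/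
section Aux

open Finset

variable {V : Type*} [Fintype V] [DecidableEq V]

/-- divergence of `f` at node `i` (only arcs in `E` count). -/
def dvg (E : Finset (V × V)) (f : V × V → ℤ) (i : V) : ℤ :=
  (∑ e ∈ E.filter (fun e => e.1 = i), f e) -
    (∑ e ∈ E.filter (fun e => e.2 = i), f e)

/-- residual arc from `v` to `w`. -/
def Res (E : Finset (V × V)) (f : V × V → ℤ) (v w : V) : Prop :=
  ((v, w) ∈ E ∧ 0 < f (v, w)) ∨ ((w, v) ∈ E ∧ f (w, v) < 0)

lemma res_out (E : Finset (V × V)) (f : V × V → ℤ)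
    (hdiv : ∀ i, dvg E f i = 0) {w v : V} (h : Res E f w v) :
    ∃ z, Res E f v z := by
  by_contra hno
  push_neg at hno
  have hout : ∀ e ∈ E.filter (fun e => e.1 = v), f e ≤ 0 := by
    rintro ⟨a, c⟩ he
    simp only [mem_filter] at he
    by_contra h'
    push_neg at h'
    exact hno c (Or.inl ⟨by rw [← he.2]; exact he.1, by rw [← he.2]; exact h'⟩)
  have hin : ∀ e ∈ E.filter (fun e => e.2 = v), 0 ≤ f e := by
    rintro ⟨a, c⟩ he
    simp only [mem_filter] at he
    by_contra h'
    push_neg at h'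
    exact hno a (Or.inr ⟨by rw [← he.2]; exact he.1, by rw [← he.2]; exact h'⟩)
  have hd := hdiv v
  unfold dvg at hd
  rcases h with ⟨hmem, hpos⟩ | ⟨hmem, hneg⟩
  · have : 0 < ∑ e ∈ E.filter (fun e => e.2 = v), f e :=
      Finset.sum_pos' hin ⟨(w, v), by simp [mem_filter, hmem], hpos⟩
    have h2 : ∑ e ∈ E.filter (fun e => e.1 = v), f e ≤ 0 :=
      Finset.sum_nonpos hout
    omega
  · have h1 : 0 < ∑ e ∈ E.filter (fun e => e.1 = v), (-f e) :=
      Finset.sum_pos' (fun e he => by simpa using hout e he)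
        ⟨(v, w), by simp [mem_filter, hmem], by simpa using hneg⟩
    have h1' : ∑ e ∈ E.filter (fun e => e.1 = v), f e < 0 := by
      rw [Finset.sum_neg_distrib] at h1; omega
    have h2 : 0 ≤ ∑ e ∈ E.filter (fun e => e.2 = v), f e :=
      Finset.sum_nonneg hin
    omega

set_option linter.unusedSectionVars false

/-- one step along residual arcs -/
noncomputable def nxt (E : Finset (V × V)) (f : V × V → ℤ)
    (hdiv : ∀ i, dvg E f i = 0)
    (p : {v : V // ∃ w, Res E f w v}) : {v : V // ∃ w, Res E f w v} :=
  ⟨(res_out E f hdiv p.2.choose_spec).choose,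
    p.1, (res_out E f hdiv p.2.choose_spec).choose_spec⟩

lemma nxt_spec (E : Finset (V × V)) (f : V × V → ℤ)
    (hdiv : ∀ i, dvg E f i = 0) (p : {v : V // ∃ w, Res E f w v}) :
    Res E f p.1 (nxt E f hdiv p).1 :=
  (res_out E f hdiv p.2.choose_spec).choose_spec

/-- unit step function along a residual arc from `a` to `b`. -/
def stp (E : Finset (V × V)) (f : V × V → ℤ) (a b : V) : (V × V) → ℤ :=
  fun e => if (a, b) ∈ E ∧ 0 < f (a, b) then (if e = (a, b) then 1 else 0)
           else (if e = (b, a) then -1 else 0)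

lemma dvg_stp (E : Finset (V × V)) (f : V × V → ℤ) {a b : V}
    (h : Res E f a b) (i : V) :
    dvg E (stp E f a b) i =
      (if a = i then 1 else 0) - (if b = i then 1 else 0) := by
  unfold dvg stp
  by_cases hc : (a, b) ∈ E ∧ 0 < f (a, b)
  · simp only [if_pos hc]
    rw [Finset.sum_ite_eq' (E.filter (fun e => e.1 = i)) ((a, b) : V × V) (fun _ => (1:ℤ)),
        Finset.sum_ite_eq' (E.filter (fun e => e.2 = i)) ((a, b) : V × V) (fun _ => (1:ℤ))]
    simp [mem_filter, hc.1]
  · have hc' : (b, a) ∈ E ∧ f (b, a) < 0 := by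
      rcases h with h | h
      · exact absurd h hc
      · exact h
    simp only [if_neg hc]
    rw [Finset.sum_ite_eq' (E.filter (fun e => e.1 = i)) ((b, a) : V × V) (fun _ => (-1:ℤ)),
        Finset.sum_ite_eq' (E.filter (fun e => e.2 = i)) ((b, a) : V × V) (fun _ => (-1:ℤ))]
    simp only [mem_filter, hc'.1, true_and]
    by_cases h1 : b = i <;> by_cases h2 : a = i <;> simp [h1, h2] <;> omega

lemma dvg_sum (E : Finset (V × V)) {ι : Type*} (s : Finset ι) (g : ι → (V × V) → ℤ)
    (i : V) : dvg E (fun e => ∑ t ∈ s, g t e) i = ∑ t ∈ s, dvg E (g t) i := by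
  unfold dvg
  rw [Finset.sum_comm (s := E.filter (fun e => e.1 = i)) (t := s),
      Finset.sum_comm (s := E.filter (fun e => e.2 = i)) (t := s),
      ← Finset.sum_sub_distrib]

lemma stp_cases (E : Finset (V × V)) (f : V × V → ℤ) {a b : V}
    (h : Res E f a b) (e : V × V) (hne : stp E f a b e ≠ 0) :
    (stp E f a b e = 1 ∧ e = (a, b) ∧ e ∈ E ∧ 0 < f e) ∨
      (stp E f a b e = -1 ∧ e = (b, a) ∧ e ∈ E ∧ f e < 0) := by
  unfold stp at hne ⊢
  by_cases hc : (a, b) ∈ E ∧ 0 < f (a, b)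
  · rw [if_pos hc] at hne ⊢
    by_cases he : e = (a, b)
    · subst he; exact Or.inl ⟨if_pos rfl, rfl, hc.1, hc.2⟩
    · simp [he] at hne
  · have hc' : (b, a) ∈ E ∧ f (b, a) < 0 := by
      rcases h with h | h
      · exact absurd h hc
      · exact h
    rw [if_neg hc] at hne ⊢
    by_cases he : e = (b, a)
    · subst he; exact Or.inr ⟨if_pos rfl, rfl, hc'.1, hc'.2⟩
    · simp [he] at hne

lemma cycle_extract (E : Finset (V × V)) (f : V × V → ℤ)
    (hdiv : ∀ i, dvg E f i = 0) (hne : ∃ e ∈ E, f e ≠ 0) :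
    ∃ c : V × V → ℤ, (∀ i, dvg E c i = 0) ∧ (∃ e ∈ E, c e ≠ 0) ∧
      ∀ e, c e = 0 ∨ (c e = 1 ∧ 0 < f e) ∨ (c e = -1 ∧ f e < 0) := by
  classical
  obtain ⟨e1, he1, hne1⟩ := hne
  have hp0 : ∃ v : V, ∃ w, Res E f w v := by
    rcases lt_or_gt_of_ne hne1 with h | h
    · exact ⟨e1.1, e1.2, Or.inr ⟨he1, h⟩⟩
    · exact ⟨e1.2, e1.1, Or.inl ⟨he1, h⟩⟩
  obtain ⟨v0, hv0⟩ := hp0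
  set u : ℕ → V := fun n => ((nxt E f hdiv)^[n] ⟨v0, hv0⟩).1 with hu
  have hstep : ∀ n, Res E f (u n) (u (n + 1)) := by
    intro n
    have h := nxt_spec E f hdiv ((nxt E f hdiv)^[n] ⟨v0, hv0⟩)
    rw [hu]
    simpa [Function.iterate_succ_apply'] using h
  have hP : ∃ n : ℕ, ∃ m, m < n ∧ u m = u n := by
    obtain ⟨a, b, hab, h⟩ := Fintype.exists_ne_map_eq_of_card_lt
      (fun i : Fin (Fintype.card V + 1) => u i) (by simp)
    rcases lt_or_gt_of_ne (fun h' : (a : ℕ) = b => hab (Fin.ext h')) with hl | hl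
    · exact ⟨b, a, hl, h⟩
    · exact ⟨a, b, hl, h.symm⟩
  set n := Nat.find hP with hn
  obtain ⟨m, hmn, hum⟩ := Nat.find_spec hP
  have hinj : ∀ s t, s < n → t < n → u s = u t → s = t := by
    intro s t hs ht hst
    by_contra hne'
    rcases lt_or_gt_of_ne hne' with h | h
    · exact Nat.find_min hP ht ⟨s, h, hst⟩
    · exact Nat.find_min hP hs ⟨t, h, hst.symm⟩
  have uniq : ∀ (e : V × V), ∀ s t, s ∈ Finset.Ico m n → t ∈ Finset.Ico m n →
      stp E f (u s) (u (s + 1)) e ≠ 0 → stp E f (u t) (u (t + 1)) e ≠ 0 → s = t := by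
    intro e s t hs ht hsne htne
    simp only [Finset.mem_Ico] at hs ht
    rcases stp_cases E f (hstep s) e hsne with ⟨_, he, _, hf⟩ | ⟨_, he, _, hf⟩ <;>
      rcases stp_cases E f (hstep t) e htne with ⟨_, he', _, hf'⟩ | ⟨_, he', _, hf'⟩
    · exact hinj s t hs.2 ht.2 (congrArg Prod.fst (he.symm.trans he'))
    · omega
    · omega
    · exact hinj s t hs.2 ht.2 (congrArg Prod.snd (he.symm.trans he'))
  refine ⟨fun e => ∑ t ∈ Finset.Ico m n, stp E f (u t) (u (t + 1)) e, ?_, ?_, ?_⟩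
  · intro i
    rw [dvg_sum, Finset.sum_congr rfl (fun t _ => dvg_stp E f (hstep t) i)]
    rw [Finset.sum_Ico_eq_sum_range]
    set g : ℕ → ℤ := fun j => if u (m + j) = i then 1 else 0 with hg
    have hterm : ∀ j ∈ Finset.range (n - m),
        ((if u (m + j) = i then (1:ℤ) else 0) - if u (m + j + 1) = i then 1 else 0)
          = g j - g (j + 1) := by
      intro j _
      have e1 : m + (j + 1) = m + j + 1 := by omega
      simp only [hg, e1]
    rw [Finset.sum_congr rfl hterm, Finset.sum_range_sub' g (n - m)]
    have e2 : m + (n - m) = n := by omega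
    simp only [hg, Nat.add_zero, e2, hum]
    ring
  · by_cases hcond : (u m, u (m + 1)) ∈ E ∧ 0 < f (u m, u (m + 1))
    · refine ⟨(u m, u (m + 1)), hcond.1, ?_⟩
      have h1 : stp E f (u m) (u (m + 1)) (u m, u (m + 1)) = 1 := by
        unfold stp; rw [if_pos hcond, if_pos rfl]
      have hm : m ∈ Finset.Ico m n := Finset.mem_Ico.2 ⟨le_refl m, hmn⟩
      have hz : ∀ s ∈ Finset.Ico m n, s ≠ m →
          stp E f (u s) (u (s + 1)) (u m, u (m + 1)) = 0 := by
        intro s hs hsm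
        by_contra hsne
        exact hsm (uniq _ s m hs hm hsne (h1 ▸ one_ne_zero))
      have hsum : (∑ t ∈ Finset.Ico m n, stp E f (u t) (u (t + 1)) (u m, u (m + 1))) = 1 :=
        (Finset.sum_eq_single_of_mem m hm hz).trans h1
      simp only [hsum]
      omega
    · have hcond' : (u (m + 1), u m) ∈ E ∧ f (u (m + 1), u m) < 0 := by
        rcases hstep m with h | h
        · exact absurd h hcond
        · exact h
      refine ⟨(u (m + 1), u m), hcond'.1, ?_⟩
      have h1 : stp E f (u m) (u (m + 1)) (u (m + 1), u m) = -1 := by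
        unfold stp; rw [if_neg hcond, if_pos rfl]
      have hm : m ∈ Finset.Ico m n := Finset.mem_Ico.2 ⟨le_refl m, hmn⟩
      have hz : ∀ s ∈ Finset.Ico m n, s ≠ m →
          stp E f (u s) (u (s + 1)) (u (m + 1), u m) = 0 := by
        intro s hs hsm
        by_contra hsne
        exact hsm (uniq _ s m hs hm hsne (by rw [h1]; omega))
      have hsum : (∑ t ∈ Finset.Ico m n, stp E f (u t) (u (t + 1)) (u (m + 1), u m)) = -1 :=
        (Finset.sum_eq_single_of_mem m hm hz).trans h1
      simp only [hsum]
      omega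
  · intro e
    by_cases hz : ∀ t ∈ Finset.Ico m n, stp E f (u t) (u (t + 1)) e = 0
    · exact Or.inl (Finset.sum_eq_zero hz)
    · push_neg at hz
      obtain ⟨t, ht, htne⟩ := hz
      have hz' : ∀ s ∈ Finset.Ico m n, s ≠ t → stp E f (u s) (u (s + 1)) e = 0 := by
        intro s hs hst
        by_contra hsne
        exact hst (uniq e s t hs ht hsne htne)
      have hce : (∑ s ∈ Finset.Ico m n, stp E f (u s) (u (s + 1)) e)
          = stp E f (u t) (u (t + 1)) e := Finset.sum_eq_single_of_mem t ht hz'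
      rcases stp_cases E f (hstep t) e htne with ⟨hv, _, _, hf⟩ | ⟨hv, _, _, hf⟩
      · exact Or.inr (Or.inl ⟨hce.trans hv, hf⟩)
      · exact Or.inr (Or.inr ⟨hce.trans hv, hf⟩)

lemma dvg_sub (E : Finset (V × V)) (f g : V × V → ℤ) (i : V) :
    dvg E (fun e => f e - g e) i = dvg E f i - dvg E g i := by
  unfold dvg; rw [Finset.sum_sub_distrib, Finset.sum_sub_distrib]; ring

lemma dvg_add (E : Finset (V × V)) (f g : V × V → ℤ) (i : V) :
    dvg E (fun e => f e + g e) i = dvg E f i + dvg E g i := by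
  unfold dvg; rw [Finset.sum_add_distrib, Finset.sum_add_distrib]; ring

lemma unit_circ (E : Finset (V × V)) :
    ∀ N : ℕ, ∀ f : V × V → ℤ, (∑ e ∈ E, (f e).natAbs) ≤ N →
    (∀ i, dvg E f i = 0) → ∀ e0 ∈ E, 0 < f e0 →
    ∃ c : V × V → ℤ, (∀ i, dvg E c i = 0) ∧ c e0 = 1 ∧
      ∀ e, c e = 0 ∨ (c e = 1 ∧ 0 < f e) ∨ (c e = -1 ∧ f e < 0) := by
  intro N
  induction N with
  | zero =>
    intro f hsum hdiv e0 he0 hpos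
    have h0 : (f e0).natAbs = 0 := by
      have h := Finset.sum_eq_zero_iff.mp (Nat.le_zero.mp hsum)
      exact h e0 he0
    omega
  | succ N ih =>
    intro f hsum hdiv e0 he0 hpos
    obtain ⟨c, hcdiv, ⟨ew, hew, hcw⟩, hsign⟩ :=
      cycle_extract E f hdiv ⟨e0, he0, by omega⟩
    rcases hsign e0 with h0 | ⟨h1, _⟩ | ⟨h1, hneg⟩
    · -- the cycle avoids e0 : cancel it and recurse
      have hd : ∀ i, dvg E (fun e => f e - c e) i = 0 := by
        intro i; rw [dvg_sub, hdiv, hcdiv]; ring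
      have hle : ∀ e ∈ E, (f e - c e).natAbs ≤ (f e).natAbs := by
        intro e _
        rcases hsign e with h | ⟨h, hp⟩ | ⟨h, hn⟩ <;> omega
      have hlt : (f ew - c ew).natAbs < (f ew).natAbs := by
        rcases hsign ew with h | ⟨h, hp⟩ | ⟨h, hn⟩ <;> omega
      have hsum' : (∑ e ∈ E, (f e - c e).natAbs) ≤ N := by
        have := Finset.sum_lt_sum hle ⟨ew, hew, hlt⟩
        omega
      obtain ⟨c', hc'div, hc'e0, hsign'⟩ :=
        ih (fun e => f e - c e) hsum' hd e0 he0 (by simpa [h0] using hpos)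
      refine ⟨c', hc'div, hc'e0, fun e => ?_⟩
      rcases hsign' e with h | ⟨h, hp⟩ | ⟨h, hn⟩
      · exact Or.inl h
      · refine Or.inr (Or.inl ⟨h, ?_⟩)
        rcases hsign e with h' | ⟨h', hp'⟩ | ⟨h', hn'⟩ <;> omega
      · refine Or.inr (Or.inr ⟨h, ?_⟩)
        rcases hsign e with h' | ⟨h', hp'⟩ | ⟨h', hn'⟩ <;> omega
    · exact ⟨c, hcdiv, h1, hsign⟩
    · omega

end Aux

/-- Integer feasibility for the flow problem `(F)` on a directed graph with arc
set `E`, arc bounds `l ≤ x ≤ u` and node balances `b`. -/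
def FlowFeasible {V : Type*} [Fintype V] [DecidableEq V]
    (E : Finset (V × V)) (l u : V × V → ℤ) (b : V → ℤ) (x : V × V → ℤ) : Prop :=
  (∀ e ∈ E, l e ≤ x e ∧ x e ≤ u e) ∧
  ∀ i : V,
    (∑ e ∈ E.filter (fun e => e.1 = i), x e) -
      (∑ e ∈ E.filter (fun e => e.2 = i), x e) = b i

/-- For the integer flow problem `(F)` with node balances in `{-1, 0, 1}`, bound
consistency implies range consistency: if the lower and the upper capacity of an
arc `e0` are both attained by integer feasible flows, then every integer value
in between is attained by some integer feasible flow. -/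
theorem flow_bound_consistency_implies_range_consistency
    {V : Type*} [Fintype V] [DecidableEq V]
    (E : Finset (V × V)) (l u : V × V → ℤ) (b : V → ℤ)
    (hb : ∀ i : V, b i = -1 ∨ b i = 0 ∨ b i = 1)
    (e0 : V × V) (he0 : e0 ∈ E)
    (x' x'' : V × V → ℤ)
    (hx' : FlowFeasible E l u b x') (hx'' : FlowFeasible E l u b x'')
    (hlo : x' e0 = l e0) (hhi : x'' e0 = u e0) :
    ∀ k : ℤ, l e0 ≤ k → k ≤ u e0 →
      ∃ x : V × V → ℤ, FlowFeasible E l u b x ∧ x e0 = k := by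
  intro k hk1 hk2
  obtain ⟨d, hd⟩ : ∃ d : ℕ, k = l e0 + d := ⟨(k - l e0).toNat, by omega⟩
  clear hk1
  induction d generalizing k with
  | zero => exact ⟨x', hx', by omega⟩
  | succ d ih =>
    obtain ⟨z, hz, hze0⟩ := ih (l e0 + d) (by push_cast at hd ⊢; omega)
      (by push_cast at hd ⊢; omega)
    have hdiv : ∀ i, dvg E (fun e => x'' e - z e) i = 0 := by
      intro i
      have h1 : dvg E x'' i = b i := hx''.2 i
      have h2 : dvg E z i = b i := hz.2 i
      rw [dvg_sub, h1, h2]; ring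
    have hfpos : 0 < x'' e0 - z e0 := by push_cast at hd; omega
    obtain ⟨c, hcdiv, hce0, hsign⟩ :=
      unit_circ E (∑ e ∈ E, (x'' e - z e).natAbs) (fun e => x'' e - z e) le_rfl
        hdiv e0 he0 hfpos
    refine ⟨fun e => z e + c e, ⟨?_, ?_⟩, ?_⟩
    · intro e he
      obtain ⟨hl1, hu1⟩ := hz.1 e he
      obtain ⟨hl2, hu2⟩ := hx''.1 e he
      rcases hsign e with h | ⟨h, hp⟩ | ⟨h, hn⟩ <;>
        constructor <;> simp only [h] <;> omega
    · intro i
      have h2 : dvg E z i = b i := hz.2 i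
      show dvg E (fun e => z e + c e) i = b i
      rw [dvg_add, h2, hcdiv]; ring
    · show z e0 + c e0 = k
      push_cast at hd
      omega
end

section
/- For the lot-sizing feasibility system (L_r) — flow conservation with variable bounds and binary setup variables — range consistency and bound consistency coincide: every integer value between the filtered bounds of any X_t or I_t variable belongs to an integer bound support satisfying all constraints of (L_r). -/
/-- Feasibility for the lot-sizing feasibility system `(L_r)`: flow conservation
`I_{t-1} + X_t = d_t + I_t` with `I 0 = 0`, setup constraints `X_t ≤ α̅_t Y_t`,
domains `X_t ∈ [α̲_t, α̅_t]`, `I_t ∈ [β̲_t, β̅_t]`, `Y_t ∈ {0,1}`. -/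
def FeasLr (T : ℕ) (d alo ahi blo bhi : ℕ → ℕ) (X I Y : ℕ → ℕ) : Prop :=
  I 0 = 0 ∧
  ∀ t ∈ Finset.Icc 1 T,
    I (t - 1) + X t = d t + I t ∧ X t ≤ ahi t * Y t ∧
    alo t ≤ X t ∧ X t ≤ ahi t ∧ blo t ≤ I t ∧ I t ≤ bhi t ∧ Y t ≤ 1

namespace LrAux

/-- cumulative demand -/
def Dsum (d : ℕ → ℕ) (t : ℕ) : ℤ := ∑ s ∈ Finset.Icc 1 t, (d s : ℤ)

lemma Dsum_succ (d : ℕ → ℕ) (t : ℕ) : Dsum d (t+1) = Dsum d t + d (t+1) :=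
  Finset.sum_Icc_succ_top (by omega) _

/-- Feasibility expressed in terms of cumulative production `S`. -/
def FeasS (T : ℕ) (d alo ahi blo bhi : ℕ → ℕ) (S : ℕ → ℤ) : Prop :=
  S 0 = 0 ∧ ∀ t ∈ Finset.Icc 1 T,
    (alo t : ℤ) ≤ S t - S (t-1) ∧ S t - S (t-1) ≤ (ahi t : ℤ) ∧
    (blo t : ℤ) + Dsum d t ≤ S t ∧ S t ≤ (bhi t : ℤ) + Dsum d t

lemma telescope (S : ℕ → ℤ) : ∀ b : ℕ, ∀ a ≤ b,
    S b = S a + ∑ t ∈ Finset.Icc (a+1) b, (S t - S (t-1)) := by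
  intro b
  induction b with
  | zero => intro a ha; interval_cases a; simp
  | succ b ih =>
      intro a ha
      rcases Nat.lt_or_ge a (b+1) with h | h
      · have ha' : a ≤ b := by omega
        rw [Finset.sum_Icc_succ_top (by omega)]
        have := ih a ha'
        simp only [Nat.add_sub_cancel]
        omega
      · have : a = b + 1 := by omega
        subst this
        simp

variable {T : ℕ} {d alo ahi blo bhi : ℕ → ℕ}

lemma shiftUp {S : ℕ → ℤ} (hS : FeasS T d alo ahi blo bhi S) {p q : ℕ}
    (hp1 : 1 ≤ p) (hpq : p ≤ q) (hqT : q ≤ T)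
    (hent : S p - S (p-1) < (ahi p : ℤ))
    (hexit : q = T ∨ (alo (q+1) : ℤ) < S (q+1) - S q)
    (hU : ∀ t ∈ Finset.Icc p q, S t < (bhi t : ℤ) + Dsum d t) :
    FeasS T d alo ahi blo bhi (fun t => if p ≤ t ∧ t ≤ q then S t + 1 else S t) := by
  obtain ⟨h0, hc⟩ := hS
  constructor
  · simp only [show ¬(p ≤ 0 ∧ 0 ≤ q) by omega, if_false, h0]
  intro t ht
  simp only [Finset.mem_Icc] at ht hU
  obtain ⟨hal, hah, hbl, hbh⟩ := hc t (by simp only [Finset.mem_Icc]; omega)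
  by_cases h1 : p ≤ t ∧ t ≤ q
  · have hUt := hU t h1
    by_cases h2 : p ≤ t - 1 ∧ t - 1 ≤ q
    · simp only [if_pos h1, if_pos h2]
      refine ⟨by linarith, by linarith, by linarith, by linarith⟩
    · -- t = p
      have htp : t = p := by omega
      simp only [if_pos h1, if_neg h2]
      subst htp
      refine ⟨by linarith, by linarith, by linarith, by linarith⟩
  · by_cases h2 : p ≤ t - 1 ∧ t - 1 ≤ q
    · -- t = q + 1, so q < T
      have htq : t = q + 1 := by omega
      have hqT' : q ≠ T := by omega
      have hex : (alo (q+1) : ℤ) < S (q+1) - S q := hexit.resolve_left hqT'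
      simp only [if_neg h1, if_pos h2]
      subst htq
      simp only [Nat.add_sub_cancel] at *
      refine ⟨by linarith, by linarith, by linarith, by linarith⟩
    · simp only [if_neg h1, if_neg h2]
      exact ⟨hal, hah, hbl, hbh⟩

lemma shiftDown {S : ℕ → ℤ} (hS : FeasS T d alo ahi blo bhi S) {p q : ℕ}
    (hp1 : 1 ≤ p) (hpq : p ≤ q) (hqT : q ≤ T)
    (hent : (alo p : ℤ) < S p - S (p-1))
    (hexit : q = T ∨ S (q+1) - S q < (ahi (q+1) : ℤ))
    (hL : ∀ t ∈ Finset.Icc p q, (blo t : ℤ) + Dsum d t < S t) :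
    FeasS T d alo ahi blo bhi (fun t => if p ≤ t ∧ t ≤ q then S t - 1 else S t) := by
  obtain ⟨h0, hc⟩ := hS
  constructor
  · simp only [show ¬(p ≤ 0 ∧ 0 ≤ q) by omega, if_false, h0]
  intro t ht
  simp only [Finset.mem_Icc] at ht hL
  obtain ⟨hal, hah, hbl, hbh⟩ := hc t (by simp only [Finset.mem_Icc]; omega)
  by_cases h1 : p ≤ t ∧ t ≤ q
  · have hLt := hL t h1
    by_cases h2 : p ≤ t - 1 ∧ t - 1 ≤ q
    · simp only [if_pos h1, if_pos h2]
      refine ⟨by linarith, by linarith, by linarith, by linarith⟩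
    · have htp : t = p := by omega
      simp only [if_pos h1, if_neg h2]
      subst htp
      refine ⟨by linarith, by linarith, by linarith, by linarith⟩
  · by_cases h2 : p ≤ t - 1 ∧ t - 1 ≤ q
    · have htq : t = q + 1 := by omega
      have hqT' : q ≠ T := by omega
      have hex : S (q+1) - S q < (ahi (q+1) : ℤ) := hexit.resolve_left hqT'
      simp only [if_neg h1, if_pos h2]
      subst htq
      simp only [Nat.add_sub_cancel] at *
      refine ⟨by linarith, by linarith, by linarith, by linarith⟩
    · simp only [if_neg h1, if_neg h2]
      exact ⟨hal, hah, hbl, hbh⟩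

lemma rightBlock {S S' : ℕ → ℤ} (hS : FeasS T d alo ahi blo bhi S)
    (hS' : FeasS T d alo ahi blo bhi S') {t0 : ℕ} (h1 : 1 ≤ t0) (h2 : t0 ≤ T)
    (hblock : ∀ q ∈ Finset.Icc t0 T,
      ¬((q = T ∨ (alo (q+1) : ℤ) < S (q+1) - S q) ∧
        ∀ t ∈ Finset.Icc t0 q, S t < (bhi t : ℤ) + Dsum d t)) :
    S' t0 ≤ S t0 := by
  obtain ⟨-, hc⟩ := hS
  obtain ⟨-, hc'⟩ := hS'
  set A : Finset ℕ := (Finset.Icc t0 T).filter (fun t => (bhi t : ℤ) + Dsum d t ≤ S t) with hA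
  have hAne : A.Nonempty := by
    by_contra hne
    refine hblock T (by simp [Finset.mem_Icc]; omega) ⟨Or.inl rfl, ?_⟩
    intro t ht
    by_contra hUt
    exact hne ⟨t, by simp only [hA, Finset.mem_filter]; exact ⟨ht, by linarith⟩⟩
  set q₀ := A.min' hAne with hq₀
  have hq₀mem : q₀ ∈ A := A.min'_mem hAne
  simp only [hA, Finset.mem_filter, Finset.mem_Icc] at hq₀mem
  obtain ⟨⟨hq₀1, hq₀T⟩, hq₀U⟩ := hq₀mem
  have hmin : ∀ t, t0 ≤ t → t < q₀ → S t < (bhi t : ℤ) + Dsum d t := by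
    intro t ht1 ht2
    by_contra hcon
    have : t ∈ A := by
      simp only [hA, Finset.mem_filter, Finset.mem_Icc]
      exact ⟨⟨ht1, by omega⟩, by linarith⟩
    exact absurd (A.min'_le t this) (by omega)
  have hdiff : ∀ t ∈ Finset.Icc (t0+1) q₀, S t - S (t-1) ≤ (alo t : ℤ) := by
    intro t ht
    simp only [Finset.mem_Icc] at ht
    have hq : t - 1 ∈ Finset.Icc t0 T := by simp only [Finset.mem_Icc]; omega
    have := hblock (t-1) hq
    have hUall : ∀ s ∈ Finset.Icc t0 (t-1), S s < (bhi s : ℤ) + Dsum d s := by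
      intro s hs
      simp only [Finset.mem_Icc] at hs
      exact hmin s hs.1 (by omega)
    have hnex : ¬(t - 1 = T ∨ (alo (t-1+1) : ℤ) < S (t-1+1) - S (t-1)) := by
      intro hx; exact this ⟨hx, hUall⟩
    push_neg at hnex
    have := hnex.2
    rwa [show t - 1 + 1 = t by omega] at this
  have ht1 := telescope S q₀ t0 (by omega)
  have ht2 := telescope S' q₀ t0 (by omega)
  have hsum1 : ∑ t ∈ Finset.Icc (t0+1) q₀, (S t - S (t-1)) ≤
      ∑ t ∈ Finset.Icc (t0+1) q₀, (alo t : ℤ) :=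
    Finset.sum_le_sum hdiff
  have hsum2 : ∑ t ∈ Finset.Icc (t0+1) q₀, (alo t : ℤ) ≤
      ∑ t ∈ Finset.Icc (t0+1) q₀, (S' t - S' (t-1)) := by
    refine Finset.sum_le_sum ?_
    intro t ht
    simp only [Finset.mem_Icc] at ht
    exact (hc' t (by simp only [Finset.mem_Icc]; omega)).1
  have hub : S' q₀ ≤ (bhi q₀ : ℤ) + Dsum d q₀ :=
    (hc' q₀ (by simp only [Finset.mem_Icc]; omega)).2.2.2
  linarith

lemma leftBlockA {S S' : ℕ → ℤ} (hS : FeasS T d alo ahi blo bhi S)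
    (hS' : FeasS T d alo ahi blo bhi S') {m : ℕ} (hm : m ≤ T)
    (hblock : ∀ p ∈ Finset.Icc 1 m,
      ¬((alo p : ℤ) < S p - S (p-1) ∧
        ∀ t ∈ Finset.Icc p m, (blo t : ℤ) + Dsum d t < S t)) :
    S m ≤ S' m := by
  obtain ⟨h0, hc⟩ := hS
  obtain ⟨h0', hc'⟩ := hS'
  set B : Finset ℕ := (Finset.Icc 1 m).filter (fun t => S t ≤ (blo t : ℤ) + Dsum d t) with hB
  -- find p₀ with S p₀ ≤ S' p₀ and everything above p₀ strictly above lower bound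
  obtain ⟨p₀, hp₀m, hp₀le, hp₀max⟩ :
      ∃ p₀, p₀ ≤ m ∧ S p₀ ≤ S' p₀ ∧
        ∀ t, p₀ < t → t ≤ m → (blo t : ℤ) + Dsum d t < S t := by
    by_cases hBne : B.Nonempty
    · set p₀ := B.max' hBne with hp₀
      have hmem : p₀ ∈ B := B.max'_mem hBne
      simp only [hB, Finset.mem_filter, Finset.mem_Icc] at hmem
      refine ⟨p₀, hmem.1.2, ?_, ?_⟩
      · have := (hc' p₀ (by simp only [Finset.mem_Icc]; omega)).2.2.1
        linarith [hmem.2]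
      · intro t ht1 ht2
        by_contra hcon
        have : t ∈ B := by
          simp only [hB, Finset.mem_filter, Finset.mem_Icc]
          exact ⟨⟨by omega, ht2⟩, by linarith⟩
        exact absurd (B.le_max' t this) (by omega)
    · refine ⟨0, by omega, by rw [h0, h0'], ?_⟩
      intro t ht1 ht2
      by_contra hcon
      exact hBne ⟨t, by simp only [hB, Finset.mem_filter, Finset.mem_Icc]
                        exact ⟨⟨by omega, ht2⟩, by linarith⟩⟩
  have hdiff : ∀ t ∈ Finset.Icc (p₀+1) m, S t - S (t-1) ≤ (alo t : ℤ) := by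
    intro t ht
    simp only [Finset.mem_Icc] at ht
    have := hblock t (by simp only [Finset.mem_Icc]; omega)
    have hLall : ∀ s ∈ Finset.Icc t m, (blo s : ℤ) + Dsum d s < S s := by
      intro s hs
      simp only [Finset.mem_Icc] at hs
      exact hp₀max s (by omega) hs.2
    by_contra hcon
    exact this ⟨by linarith, hLall⟩
  have ht1 := telescope S m p₀ hp₀m
  have ht2 := telescope S' m p₀ hp₀m
  have hsum1 : ∑ t ∈ Finset.Icc (p₀+1) m, (S t - S (t-1)) ≤
      ∑ t ∈ Finset.Icc (p₀+1) m, (alo t : ℤ) := Finset.sum_le_sum hdiff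
  have hsum2 : ∑ t ∈ Finset.Icc (p₀+1) m, (alo t : ℤ) ≤
      ∑ t ∈ Finset.Icc (p₀+1) m, (S' t - S' (t-1)) := by
    refine Finset.sum_le_sum ?_
    intro t ht
    simp only [Finset.mem_Icc] at ht
    exact (hc' t (by simp only [Finset.mem_Icc]; omega)).1
  linarith

lemma leftBlockB {S S' : ℕ → ℤ} (hS : FeasS T d alo ahi blo bhi S)
    (hS' : FeasS T d alo ahi blo bhi S') {t0 : ℕ} (h1 : 1 ≤ t0) (h2 : t0 ≤ T)
    (hblock : ∀ p ∈ Finset.Icc 1 t0,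
      ¬(S p - S (p-1) < (ahi p : ℤ) ∧
        ∀ t ∈ Finset.Icc p t0, S t < (bhi t : ℤ) + Dsum d t)) :
    S' t0 ≤ S t0 := by
  obtain ⟨h0, hc⟩ := hS
  obtain ⟨h0', hc'⟩ := hS'
  set B : Finset ℕ := (Finset.Icc 1 t0).filter (fun t => (bhi t : ℤ) + Dsum d t ≤ S t) with hB
  obtain ⟨p₀, hp₀m, hp₀le, hp₀max⟩ :
      ∃ p₀, p₀ ≤ t0 ∧ S' p₀ ≤ S p₀ ∧
        ∀ t, p₀ < t → t ≤ t0 → S t < (bhi t : ℤ) + Dsum d t := by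
    by_cases hBne : B.Nonempty
    · set p₀ := B.max' hBne with hp₀
      have hmem : p₀ ∈ B := B.max'_mem hBne
      simp only [hB, Finset.mem_filter, Finset.mem_Icc] at hmem
      refine ⟨p₀, hmem.1.2, ?_, ?_⟩
      · have := (hc' p₀ (by simp only [Finset.mem_Icc]; omega)).2.2.2
        linarith [hmem.2]
      · intro t ht1 ht2
        by_contra hcon
        have : t ∈ B := by
          simp only [hB, Finset.mem_filter, Finset.mem_Icc]
          exact ⟨⟨by omega, ht2⟩, by linarith⟩
        exact absurd (B.le_max' t this) (by omega)
    · refine ⟨0, by omega, by rw [h0, h0'], ?_⟩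
      intro t ht1 ht2
      by_contra hcon
      exact hBne ⟨t, by simp only [hB, Finset.mem_filter, Finset.mem_Icc]
                        exact ⟨⟨by omega, ht2⟩, by linarith⟩⟩
  have hdiff : ∀ t ∈ Finset.Icc (p₀+1) t0, (ahi t : ℤ) ≤ S t - S (t-1) := by
    intro t ht
    simp only [Finset.mem_Icc] at ht
    have := hblock t (by simp only [Finset.mem_Icc]; omega)
    have hUall : ∀ s ∈ Finset.Icc t t0, S s < (bhi s : ℤ) + Dsum d s := by
      intro s hs
      simp only [Finset.mem_Icc] at hs
      exact hp₀max s (by omega) hs.2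
    by_contra hcon
    exact this ⟨by linarith, hUall⟩
  have ht1 := telescope S t0 p₀ hp₀m
  have ht2 := telescope S' t0 p₀ hp₀m
  have hsum1 : ∑ t ∈ Finset.Icc (p₀+1) t0, (ahi t : ℤ) ≤
      ∑ t ∈ Finset.Icc (p₀+1) t0, (S t - S (t-1)) := Finset.sum_le_sum hdiff
  have hsum2 : ∑ t ∈ Finset.Icc (p₀+1) t0, (S' t - S' (t-1)) ≤
      ∑ t ∈ Finset.Icc (p₀+1) t0, (ahi t : ℤ) := by
    refine Finset.sum_le_sum ?_
    intro t ht
    simp only [Finset.mem_Icc] at ht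
    exact (hc' t (by simp only [Finset.mem_Icc]; omega)).2.1
  linarith

lemma augX {S S' : ℕ → ℤ} (hS : FeasS T d alo ahi blo bhi S)
    (hS' : FeasS T d alo ahi blo bhi S') {t0 : ℕ} (h1 : 1 ≤ t0) (h2 : t0 ≤ T)
    (hlt : S t0 - S (t0-1) < S' t0 - S' (t0-1)) :
    ∃ S'', FeasS T d alo ahi blo bhi S'' ∧
      S'' t0 - S'' (t0-1) = S t0 - S (t0-1) + 1 := by
  have hd' := (hS'.2 t0 (by simp only [Finset.mem_Icc]; omega))
  have hd := (hS.2 t0 (by simp only [Finset.mem_Icc]; omega))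
  have hent : S t0 - S (t0-1) < (ahi t0 : ℤ) := by linarith [hd'.2.1]
  by_cases hR : ∃ q ∈ Finset.Icc t0 T,
      (q = T ∨ (alo (q+1) : ℤ) < S (q+1) - S q) ∧
      ∀ t ∈ Finset.Icc t0 q, S t < (bhi t : ℤ) + Dsum d t
  · obtain ⟨q, hq, hexit, hU⟩ := hR
    simp only [Finset.mem_Icc] at hq
    refine ⟨_, shiftUp hS (by omega) hq.1 hq.2 hent hexit hU, ?_⟩
    rw [if_pos (show t0 ≤ t0 ∧ t0 ≤ q by omega),
      if_neg (show ¬(t0 ≤ t0 - 1 ∧ t0 - 1 ≤ q) by omega)]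
    ring
  · by_cases hL : ∃ p ∈ Finset.Icc 1 (t0-1),
        (alo p : ℤ) < S p - S (p-1) ∧
        ∀ t ∈ Finset.Icc p (t0-1), (blo t : ℤ) + Dsum d t < S t
    · obtain ⟨p, hp, hent', hLb⟩ := hL
      simp only [Finset.mem_Icc] at hp
      have hexit' : (t0 - 1 : ℕ) = T ∨ S (t0-1+1) - S (t0-1) < (ahi (t0-1+1) : ℤ) := by
        right
        rwa [show t0 - 1 + 1 = t0 by omega]
      refine ⟨_, shiftDown hS hp.1 hp.2 (by omega) hent' hexit' hLb, ?_⟩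
      rw [if_neg (show ¬(p ≤ t0 ∧ t0 ≤ t0 - 1) by omega),
        if_pos (show p ≤ t0 - 1 ∧ t0 - 1 ≤ t0 - 1 by omega)]
      ring
    · exfalso
      have hr : S' t0 ≤ S t0 := by
        refine rightBlock hS hS' h1 h2 ?_
        intro q hq hcon
        exact hR ⟨q, hq, hcon⟩
      have hl : S (t0-1) ≤ S' (t0-1) := by
        refine leftBlockA hS hS' (show t0 - 1 ≤ T by omega) ?_
        intro p hp hcon
        exact hL ⟨p, hp, hcon⟩
      linarith

lemma augI {S S' : ℕ → ℤ} (hS : FeasS T d alo ahi blo bhi S)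
    (hS' : FeasS T d alo ahi blo bhi S') {t0 : ℕ} (h1 : 1 ≤ t0) (h2 : t0 ≤ T)
    (hlt : S t0 < S' t0) :
    ∃ S'', FeasS T d alo ahi blo bhi S'' ∧ S'' t0 = S t0 + 1 := by
  by_cases hR : ∃ q ∈ Finset.Icc t0 T,
      (q = T ∨ (alo (q+1) : ℤ) < S (q+1) - S q) ∧
      ∀ t ∈ Finset.Icc t0 q, S t < (bhi t : ℤ) + Dsum d t
  · by_cases hL : ∃ p ∈ Finset.Icc 1 t0,
        S p - S (p-1) < (ahi p : ℤ) ∧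
        ∀ t ∈ Finset.Icc p t0, S t < (bhi t : ℤ) + Dsum d t
    · obtain ⟨q, hq, hexit, hU⟩ := hR
      obtain ⟨p, hp, hent, hU'⟩ := hL
      simp only [Finset.mem_Icc] at hq hp
      have hUall : ∀ t ∈ Finset.Icc p q, S t < (bhi t : ℤ) + Dsum d t := by
        intro t ht
        simp only [Finset.mem_Icc] at ht
        rcases Nat.le_total t t0 with h | h
        · exact hU' t (by simp only [Finset.mem_Icc]; omega)
        · exact hU t (by simp only [Finset.mem_Icc]; omega)
      refine ⟨_, shiftUp hS hp.1 (by omega) hq.2 hent hexit hUall, ?_⟩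
      rw [if_pos (show p ≤ t0 ∧ t0 ≤ q by omega)]
    · exfalso
      have : S' t0 ≤ S t0 := by
        refine leftBlockB hS hS' h1 h2 ?_
        intro p hp hcon
        exact hL ⟨p, hp, hcon⟩
      linarith
  · exfalso
    have : S' t0 ≤ S t0 := by
      refine rightBlock hS hS' h1 h2 ?_
      intro q hq hcon
      exact hR ⟨q, hq, hcon⟩
    linarith

lemma reachX {t0 : ℕ} (h1 : 1 ≤ t0) (h2 : t0 ≤ T) (k : ℤ) :
    ∀ n : ℕ, ∀ S1 S2 : ℕ → ℤ, FeasS T d alo ahi blo bhi S1 →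
      FeasS T d alo ahi blo bhi S2 →
      S1 t0 - S1 (t0-1) ≤ k → k ≤ S2 t0 - S2 (t0-1) →
      (k - (S1 t0 - S1 (t0-1))).toNat = n →
      ∃ S, FeasS T d alo ahi blo bhi S ∧ S t0 - S (t0-1) = k := by
  intro n
  induction n with
  | zero =>
      intro S1 S2 hS1 hS2 hle hge hn
      exact ⟨S1, hS1, by omega⟩
  | succ n ih =>
      intro S1 S2 hS1 hS2 hle hge hn
      have hlt : S1 t0 - S1 (t0-1) < S2 t0 - S2 (t0-1) := by omega
      obtain ⟨S'', hS'', heq⟩ := augX hS1 hS2 h1 h2 hlt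
      refine ih S'' S2 hS'' hS2 (by omega) hge (by omega)

lemma reachI {t0 : ℕ} (h1 : 1 ≤ t0) (h2 : t0 ≤ T) (k : ℤ) :
    ∀ n : ℕ, ∀ S1 S2 : ℕ → ℤ, FeasS T d alo ahi blo bhi S1 →
      FeasS T d alo ahi blo bhi S2 →
      S1 t0 ≤ k → k ≤ S2 t0 → (k - S1 t0).toNat = n →
      ∃ S, FeasS T d alo ahi blo bhi S ∧ S t0 = k := by
  intro n
  induction n with
  | zero =>
      intro S1 S2 hS1 hS2 hle hge hn
      exact ⟨S1, hS1, by omega⟩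
  | succ n ih =>
      intro S1 S2 hS1 hS2 hle hge hn
      obtain ⟨S'', hS'', heq⟩ := augI hS1 hS2 h1 h2 (by omega)
      refine ih S'' S2 hS'' hS2 (by omega) hge (by omega)

lemma toS {X I Y : ℕ → ℕ} (h : FeasLr T d alo ahi blo bhi X I Y) :
    FeasS T d alo ahi blo bhi (fun t => ∑ s ∈ Finset.Icc 1 t, (X s : ℤ)) ∧
    (∀ t ∈ Finset.Icc 1 T,
      (∑ s ∈ Finset.Icc 1 t, (X s : ℤ)) - (∑ s ∈ Finset.Icc 1 (t-1), (X s : ℤ)) = X t ∧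
      (∑ s ∈ Finset.Icc 1 t, (X s : ℤ)) = Dsum d t + I t) := by
  obtain ⟨hI0, hc⟩ := h
  have hdiff : ∀ t : ℕ, 1 ≤ t →
      (∑ s ∈ Finset.Icc 1 t, (X s : ℤ)) - (∑ s ∈ Finset.Icc 1 (t-1), (X s : ℤ)) = X t := by
    intro t ht
    obtain ⟨u, rfl⟩ : ∃ u, t = u + 1 := ⟨t - 1, by omega⟩
    rw [Finset.sum_Icc_succ_top (by omega)]
    simp
  have hSI : ∀ t : ℕ, t ≤ T → (∑ s ∈ Finset.Icc 1 t, (X s : ℤ)) = Dsum d t + I t := by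
    intro t
    induction t with
    | zero => intro _; simp [Dsum, hI0]
    | succ t ih =>
        intro ht
        obtain ⟨hflow, -⟩ := hc (t+1) (by simp only [Finset.mem_Icc]; omega)
        rw [Finset.sum_Icc_succ_top (by omega), ih (by omega), Dsum_succ]
        simp only [Nat.add_sub_cancel] at hflow
        have : (I t : ℤ) + X (t+1) = d (t+1) + I (t+1) := by exact_mod_cast hflow
        linarith
  refine ⟨⟨by simp, ?_⟩, ?_⟩
  · intro t ht
    simp only [Finset.mem_Icc] at ht
    obtain ⟨-, -, hal, hah, hbl, hbh, -⟩ := hc t (by simp only [Finset.mem_Icc]; omega)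
    have h1 := hdiff t ht.1
    have h2 := hSI t ht.2
    simp only []
    rw [h1, h2]
    refine ⟨by exact_mod_cast hal, by exact_mod_cast hah, ?_, ?_⟩
    · have : (blo t : ℤ) ≤ I t := by exact_mod_cast hbl
      linarith
    · have : (I t : ℤ) ≤ bhi t := by exact_mod_cast hbh
      linarith
  · intro t ht
    simp only [Finset.mem_Icc] at ht
    exact ⟨hdiff t ht.1, hSI t ht.2⟩

lemma fromS {S : ℕ → ℤ} (hS : FeasS T d alo ahi blo bhi S) :
    ∃ X I Y : ℕ → ℕ, FeasLr T d alo ahi blo bhi X I Y ∧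
      (∀ t ∈ Finset.Icc 1 T, (X t : ℤ) = S t - S (t-1) ∧ (I t : ℤ) = S t - Dsum d t) := by
  obtain ⟨h0, hc⟩ := hS
  refine ⟨fun t => (S t - S (t-1)).toNat,
          fun t => if t = 0 then 0 else (S t - Dsum d t).toNat,
          fun _ => 1, ⟨by simp, ?_⟩, ?_⟩
  · intro t ht
    beta_reduce
    simp only [Finset.mem_Icc] at ht
    obtain ⟨hal, hah, hbl, hbh⟩ := hc t (by simp only [Finset.mem_Icc]; omega)
    have halo0 : (0:ℤ) ≤ alo t := by positivity
    have hblo0 : (0:ℤ) ≤ blo t := by positivity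
    have hXt : ((S t - S (t-1)).toNat : ℤ) = S t - S (t-1) := by omega
    have hIt : ((S t - Dsum d t).toNat : ℤ) = S t - Dsum d t := by omega
    have hflow : (if t - 1 = 0 then (0:ℕ) else (S (t-1) - Dsum d (t-1)).toNat) +
        (S t - S (t-1)).toNat =
        d t + (if t = 0 then (0:ℕ) else (S t - Dsum d t).toNat) := by
      rw [if_neg (show t ≠ 0 by omega)]
      rcases Nat.eq_or_lt_of_le ht.1 with h1 | h1
      · -- t = 1
        rw [if_pos (show (t:ℕ) - 1 = 0 by omega)]
        have hD1 : Dsum d t = d t := by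
          rw [show t = 0 + 1 by omega, Dsum_succ]
          simp [Dsum]
        have hS0 : S (t - 1) = 0 := by rw [show t - 1 = 0 by omega, h0]
        omega
      · -- t ≥ 2
        rw [if_neg (show (t:ℕ) - 1 ≠ 0 by omega)]
        obtain ⟨-, -, hbl', -⟩ := hc (t-1) (by simp only [Finset.mem_Icc]; omega)
        have hblo0' : (0:ℤ) ≤ blo (t-1) := by positivity
        have hD : Dsum d t = Dsum d (t-1) + d t := by
          rw [show t = (t-1) + 1 by omega, Dsum_succ]
          simp only [Nat.add_sub_cancel]
        omega
    refine ⟨hflow, by simpa using (by omega : (S t - S (t-1)).toNat ≤ ahi t), by omega,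
      by omega, ?_, ?_, le_refl 1⟩
    · rw [if_neg (show t ≠ 0 by omega)]; omega
    · rw [if_neg (show t ≠ 0 by omega)]; omega
  · intro t ht
    beta_reduce
    simp only [Finset.mem_Icc] at ht
    obtain ⟨hal, hah, hbl, hbh⟩ := hc t (by simp only [Finset.mem_Icc]; omega)
    have halo0 : (0:ℤ) ≤ alo t := by positivity
    have hblo0 : (0:ℤ) ≤ blo t := by positivity
    rw [if_neg (show t ≠ 0 by omega)]
    constructor <;> omega

end LrAux

/-- For `(L_r)`, range consistency and bound consistency coincide: every integer
value lying between two values of `X_{t0}` (resp. `I_{t0}`) attained by bound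
supports — in particular every value between the filtered domain bounds — is
itself attained by a bound support satisfying all constraints of `(L_r)`. -/
theorem Lr_range_consistency_eq_bound_consistency
    (T : ℕ) (d alo ahi blo bhi : ℕ → ℕ)
    (t0 : ℕ) (ht0 : t0 ∈ Finset.Icc 1 T) (k : ℕ) :
    ((∃ X I Y : ℕ → ℕ, FeasLr T d alo ahi blo bhi X I Y ∧ X t0 ≤ k) →
      (∃ X I Y : ℕ → ℕ, FeasLr T d alo ahi blo bhi X I Y ∧ k ≤ X t0) →
      ∃ X I Y : ℕ → ℕ, FeasLr T d alo ahi blo bhi X I Y ∧ X t0 = k) ∧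
    ((∃ X I Y : ℕ → ℕ, FeasLr T d alo ahi blo bhi X I Y ∧ I t0 ≤ k) →
      (∃ X I Y : ℕ → ℕ, FeasLr T d alo ahi blo bhi X I Y ∧ k ≤ I t0) →
      ∃ X I Y : ℕ → ℕ, FeasLr T d alo ahi blo bhi X I Y ∧ I t0 = k) := by
  simp only [Finset.mem_Icc] at ht0
  have hmem : t0 ∈ Finset.Icc 1 T := by simp only [Finset.mem_Icc]; omega
  constructor
  · rintro ⟨X1, I1, Y1, h1, hk1⟩ ⟨X2, I2, Y2, h2, hk2⟩
    obtain ⟨hS1, hag1⟩ := LrAux.toS h1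
    obtain ⟨hS2, hag2⟩ := LrAux.toS h2
    have ha1 := hag1 t0 hmem
    have ha2 := hag2 t0 hmem
    obtain ⟨S, hS, hSk⟩ := LrAux.reachX ht0.1 ht0.2 (k : ℤ) _ _ _ hS1 hS2
      (by rw [ha1.1]; exact_mod_cast hk1) (by rw [ha2.1]; exact_mod_cast hk2) rfl
    obtain ⟨X, I, Y, hF, hag⟩ := LrAux.fromS hS
    refine ⟨X, I, Y, hF, ?_⟩
    have hx := (hag t0 hmem).1
    rw [hSk] at hx
    exact_mod_cast hx
  · rintro ⟨X1, I1, Y1, h1, hk1⟩ ⟨X2, I2, Y2, h2, hk2⟩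
    obtain ⟨hS1, hag1⟩ := LrAux.toS h1
    obtain ⟨hS2, hag2⟩ := LrAux.toS h2
    have ha1 := hag1 t0 hmem
    have ha2 := hag2 t0 hmem
    obtain ⟨S, hS, hSk⟩ := LrAux.reachI ht0.1 ht0.2 (LrAux.Dsum d t0 + (k : ℤ)) _ _ _ hS1 hS2
      (by rw [ha1.2]
          have : (I1 t0 : ℤ) ≤ (k : ℤ) := by exact_mod_cast hk1
          linarith)
      (by rw [ha2.2]
          have : (k : ℤ) ≤ (I2 t0 : ℤ) := by exact_mod_cast hk2
          linarith) rfl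
    obtain ⟨X, I, Y, hF, hag⟩ := LrAux.fromS hS
    refine ⟨X, I, Y, hF, ?_⟩
    have hx := (hag t0 hmem).2
    rw [hSk] at hx
    have : (I t0 : ℤ) = (k : ℤ) := by linarith
    exact_mod_cast this
end

section
/- The forward dynamic program DPLS is correct: f(t, i) as defined by the recurrence equals the minimum cost of a partial production plan over periods 1..t satisfying all demands d_1..d_t, all production capacities 0 ≤ X_r ≤ α̅_r, all inventory capacities 0 ≤ I_r ≤ β̅_r for r ≤ t, and ending with inventory I_t = i. In particular f(T, 0) equals the optimal cost of (L). -/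
/-- The forward dynamic program DPLS: `dpls t i` is `f(t, i)`.
`f(0,0) = 0`, `f(0,i) = ⊤` for `i ≥ 1`, and
`f(t,i) = min_{j ∈ [max(0, d_t+i-α̅_t), min(β̅_{t-1}, d_t+i)]}
  f(t-1,j) + s_t·[x>0] + p_t x + h_t i` with `x = i + d_t - j`
(truncated ℕ-subtraction realizes the `max(0, ·)`), and `f(t,i) = ⊤` for
`i > β̅_t`. -/
noncomputable def dpls (d p h s ahi bhi : ℕ → ℕ) : ℕ → ℕ → ℕ∞
  | 0, i => if i = 0 then 0 else ⊤
  | t + 1, i =>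
    if i ≤ bhi (t + 1) then
      ⨅ j ∈ Finset.Icc (d (t + 1) + i - ahi (t + 1)) (min (bhi t) (d (t + 1) + i)),
        dpls d p h s ahi bhi t j +
          (((if 0 < i + d (t + 1) - j then s (t + 1) else 0) +
              p (t + 1) * (i + d (t + 1) - j) + h (t + 1) * i : ℕ) : ℕ∞)
    else ⊤

open Finset Function

def IsPartialPlan (d ahi bhi : ℕ → ℕ) (t i : ℕ) (X I : ℕ → ℕ) : Prop :=
  I 0 = 0 ∧ I t = i ∧
    ∀ r ∈ Icc 1 t, I (r - 1) + X r = d r + I r ∧ X r ≤ ahi r ∧ I r ≤ bhi r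

def partialPlanCosts (d p h s ahi bhi : ℕ → ℕ) (t i : ℕ) : Set ℕ∞ :=
  {c | ∃ X I, IsPartialPlan d ahi bhi t i X I ∧ c = planCost t p h s X I}

def stageCost (p h s : ℕ → ℕ) (t x i : ℕ) : ℕ :=
  (if 0 < x then s t else 0) + p t * x + h t * i

section

variable {d p h s ahi bhi : ℕ → ℕ} {t i j n x y : ℕ} {X I : ℕ → ℕ}

theorem dpls_succ_of_le (hi : i ≤ bhi (t + 1)) :
    dpls d p h s ahi bhi (t + 1) i =
      ⨅ j ∈ Icc (d (t + 1) + i - ahi (t + 1)) (min (bhi t) (d (t + 1) + i)),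
        dpls d p h s ahi bhi t j + stageCost p h s (t + 1) (i + d (t + 1) - j) i := by
  rw [dpls, if_pos hi]
  rfl

theorem dpls_succ_of_lt (hi : bhi (t + 1) < i) : dpls d p h s ahi bhi (t + 1) i = ⊤ := by
  rw [dpls, if_neg hi.not_ge]

theorem planCost_succ :
    planCost (t + 1) p h s X I =
      planCost t p h s X I + stageCost p h s (t + 1) (X (t + 1)) (I (t + 1)) := by
  unfold planCost stageCost
  rw [sum_Icc_succ_top (by omega)]
  ring

theorem planCost_update_of_lt (ht : t < n) :
    planCost t p h s (update X n x) (update I n y) = planCost t p h s X I :=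
  sum_congr rfl fun r hr => by
    have hrn : r ≠ n := by grind
    rw [update_of_ne hrn, update_of_ne hrn]

namespace IsPartialPlan

theorem le_bhi (hP : IsPartialPlan d ahi bhi (t + 1) i X I) : i ≤ bhi (t + 1) := by
  obtain ⟨-, rfl, hper⟩ := hP
  exact (hper (t + 1) (by simp)).2.2

theorem restrict (hP : IsPartialPlan d ahi bhi (t + 1) i X I) :
    IsPartialPlan d ahi bhi t (I t) X I := by
  obtain ⟨h0, -, hper⟩ := hP
  exact ⟨h0, rfl, fun r hr => hper r (by grind)⟩

theorem production_eq (hP : IsPartialPlan d ahi bhi (t + 1) i X I) :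
    X (t + 1) = i + d (t + 1) - I t := by
  obtain ⟨-, rfl, hper⟩ := hP
  have := (hper (t + 1) (by simp)).1
  simp only [Nat.add_sub_cancel] at this
  omega

theorem mem_window (hP : IsPartialPlan d ahi bhi (t + 1) i X I) :
    I t ∈ Icc (d (t + 1) + i - ahi (t + 1)) (min (bhi t) (d (t + 1) + i)) := by
  obtain ⟨h0, rfl, hper⟩ := hP
  have hlast := hper (t + 1) (by simp)
  simp only [Nat.add_sub_cancel] at hlast
  have hbound : I t ≤ bhi t := by
    rcases Nat.eq_zero_or_pos t with rfl | ht
    · simp [h0]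
    · exact (hper t (by grind)).2.2
  simp only [mem_Icc, le_min_iff]
  omega

theorem extend (hP : IsPartialPlan d ahi bhi t j X I)
    (hj : j ∈ Icc (d (t + 1) + i - ahi (t + 1)) (min (bhi t) (d (t + 1) + i)))
    (hi : i ≤ bhi (t + 1)) :
    IsPartialPlan d ahi bhi (t + 1) i
      (update X (t + 1) (i + d (t + 1) - j)) (update I (t + 1) i) := by
  obtain ⟨h0, rfl, hper⟩ := hP
  simp only [mem_Icc, le_min_iff] at hj
  refine ⟨by simpa using h0, by simp, fun r hr => ?_⟩
  rcases eq_or_ne r (t + 1) with rfl | hr'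
  · simp only [update_self, Nat.add_sub_cancel, update_of_ne (Nat.ne_add_one t)]
    omega
  · rw [update_of_ne hr', update_of_ne hr', update_of_ne (by grind)]
    exact hper r (by grind)

end IsPartialPlan

theorem sInf_partialPlanCosts_zero :
    sInf (partialPlanCosts d p h s ahi bhi 0 i) = if i = 0 then 0 else ⊤ := by
  split_ifs with hi
  · subst hi
    exact nonpos_iff_eq_zero.mp (sInf_le ⟨0, 0, ⟨rfl, rfl, by simp⟩, by simp [planCost]⟩)
  · rw [sInf_eq_top]
    rintro _ ⟨X, I, ⟨h0, hend, -⟩, -⟩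
    exact absurd (hend ▸ h0) hi

theorem dpls_eq_sInf_partialPlanCosts (t i : ℕ) :
    dpls d p h s ahi bhi t i = sInf (partialPlanCosts d p h s ahi bhi t i) := by
  induction t generalizing i with
  | zero => rw [dpls, sInf_partialPlanCosts_zero]
  | succ t ih =>
    rcases lt_or_ge (bhi (t + 1)) i with hi | hi
    · rw [dpls_succ_of_lt hi, eq_comm, sInf_eq_top]
      rintro _ ⟨X, I, hP, -⟩
      exact absurd hP.le_bhi hi.not_ge
    rw [dpls_succ_of_le hi]
    apply le_antisymm
    · refine le_sInf ?_
      rintro _ ⟨X, I, hP, rfl⟩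
      calc _ ≤ dpls d p h s ahi bhi t (I t) + stageCost p h s (t + 1) (i + d (t + 1) - I t) i :=
            iInf₂_le _ hP.mem_window
        _ ≤ planCost t p h s X I + stageCost p h s (t + 1) (X (t + 1)) (I (t + 1)) := by
            rw [ih, hP.production_eq, hP.2.1]
            gcongr
            exact sInf_le ⟨X, I, hP.restrict, rfl⟩
        _ = planCost (t + 1) p h s X I := by
            rw [planCost_succ]
            push_cast
            rfl
    · refine le_iInf₂ fun j hj => ?_
      rw [ih, ENat.sInf_add]
      refine le_iInf₂ ?_
      rintro _ ⟨X, I, hP, rfl⟩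
      refine sInf_le ⟨_, _, hP.extend hj hi, ?_⟩
      rw [planCost_succ, planCost_update_of_lt (Nat.lt_add_one t)]
      simp

end

/-- Correctness of DPLS: `f(t, i)` equals the minimum cost of a partial plan
over periods `1..t` satisfying demands `d_1..d_t` and all capacities, ending
with inventory `I t = i`; in particular `f(T, 0)` is the optimal cost of `(L)`. -/
theorem dpls_correct (T : ℕ) (d p h s ahi bhi : ℕ → ℕ) :
    (∀ t i : ℕ,
      dpls d p h s ahi bhi t i =
        sInf {c : ℕ∞ | ∃ X I : ℕ → ℕ, I 0 = 0 ∧ I t = i ∧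
          (∀ r ∈ Finset.Icc 1 t, I (r - 1) + X r = d r + I r ∧ X r ≤ ahi r ∧ I r ≤ bhi r) ∧
          c = (planCost t p h s X I : ℕ∞)}) ∧
    dpls d p h s ahi bhi T 0 =
      sInf {c : ℕ∞ | ∃ X I : ℕ → ℕ, Feasible T d ahi bhi X I ∧
        c = (planCost T p h s X I : ℕ∞)} := by
  refine ⟨fun t i => ?_, ?_⟩ <;>
    simpa only [partialPlanCosts, IsPartialPlan, Feasible, and_assoc] using
      dpls_eq_sInf_partialPlanCosts _ _
end

section
/- The weighted interval scheduling dynamic program is correct: with intervals sorted by increasing end time and wisp(0) = 0, wisp(i) = max(wisp(i−1), wisp(prec_i) + w_i), the value wisp(n) equals the maximum total weight of a set of pairwise disjoint intervals among the n given intervals, where prec_i is the largest index j < i such that interval j is disjoint from interval i (and prec_i = 0 if none exists). -/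
/-- Correctness of the weighted interval scheduling dynamic program: given `n`
intervals `[u i, v i]` (indices `1..n`) with nonnegative weights `w i`, sorted by
nondecreasing end times, and `prec i` the largest index `j < i` whose interval is
disjoint from interval `i` (`prec i = 0` if none exists), the recurrence
`wisp 0 = 0`, `wisp i = max (wisp (i-1)) (wisp (prec i) + w i)` computes in
`wisp n` the maximum total weight of a set of pairwise disjoint intervals. -/
theorem wisp_dp_correct
    (n : ℕ) (u v w : ℕ → ℕ)
    (hiv : ∀ i ∈ Finset.Icc 1 n, u i ≤ v i)
    (hsorted : ∀ i ∈ Finset.Icc 1 n, ∀ j ∈ Finset.Icc 1 n, i ≤ j → v i ≤ v j)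
    (prec : ℕ → ℕ)
    (hprec_lt : ∀ i ∈ Finset.Icc 1 n, prec i < i)
    (hprec_disj : ∀ i ∈ Finset.Icc 1 n, prec i = 0 ∨
      (1 ≤ prec i ∧ Finset.Icc (u (prec i)) (v (prec i)) ∩ Finset.Icc (u i) (v i) = ∅))
    (hprec_max : ∀ i ∈ Finset.Icc 1 n, ∀ j : ℕ, prec i < j → j < i → 1 ≤ j →
      Finset.Icc (u j) (v j) ∩ Finset.Icc (u i) (v i) ≠ ∅)
    (wisp : ℕ → ℕ)
    (hw0 : wisp 0 = 0)
    (hwrec : ∀ i ∈ Finset.Icc 1 n,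
      wisp i = max (wisp (i - 1)) (wisp (prec i) + w i)) :
    IsGreatest
      {m : ℕ | ∃ S ⊆ Finset.Icc 1 n,
        (∀ i ∈ S, ∀ j ∈ S, i ≠ j →
          Finset.Icc (u i) (v i) ∩ Finset.Icc (u j) (v j) = ∅) ∧
        m = ∑ i ∈ S, w i}
      (wisp n) := by
  -- key fact: if prec i ≥ 1 then interval prec i ends strictly before interval i starts
  have hkey : ∀ i ∈ Finset.Icc 1 n, 1 ≤ prec i → v (prec i) < u i := by
    intro i hi hp
    rcases hprec_disj i hi with h0 | ⟨h1, hd⟩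
    · omega
    have hin : prec i ∈ Finset.Icc 1 n := by
      simp only [Finset.mem_Icc] at hi ⊢
      exact ⟨h1, le_trans (le_of_lt (hprec_lt i (by simp [Finset.mem_Icc, hi]))) hi.2⟩
    by_contra hle
    push_neg at hle
    have h1' : v (prec i) ≤ v i :=
      hsorted (prec i) hin i hi (le_of_lt (hprec_lt i hi))
    have h2 : u (prec i) ≤ v (prec i) := hiv _ hin
    have h3 : u i ≤ v i := hiv _ hi
    have hx : max (u i) (u (prec i)) ∈
        Finset.Icc (u (prec i)) (v (prec i)) ∩ Finset.Icc (u i) (v i) := by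
      simp only [Finset.mem_inter, Finset.mem_Icc]
      omega
    rw [hd] at hx
    exact absurd hx (Finset.notMem_empty _)
  -- hence every earlier index j ≤ prec i is disjoint from i
  have hdisj_le : ∀ i ∈ Finset.Icc 1 n, ∀ j, 1 ≤ j → j ≤ prec i →
      Finset.Icc (u j) (v j) ∩ Finset.Icc (u i) (v i) = ∅ := by
    intro i hi j hj1 hj2
    have hp : 1 ≤ prec i := le_trans hj1 hj2
    have hin : prec i ∈ Finset.Icc 1 n := by
      simp only [Finset.mem_Icc] at hi ⊢
      exact ⟨hp, le_trans (le_of_lt (hprec_lt i (by simp [Finset.mem_Icc, hi]))) hi.2⟩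
    have hjn : j ∈ Finset.Icc 1 n := by
      simp only [Finset.mem_Icc] at hin ⊢
      exact ⟨hj1, le_trans hj2 hin.2⟩
    have hvv : v j ≤ v (prec i) := hsorted j hjn (prec i) hin hj2
    have hlt : v (prec i) < u i := hkey i hi hp
    apply Finset.eq_empty_iff_forall_notMem.2
    intro x hx
    simp only [Finset.mem_inter, Finset.mem_Icc] at hx
    omega
  have main : ∀ k, k ≤ n → IsGreatest
      {m : ℕ | ∃ S ⊆ Finset.Icc 1 k,
        (∀ i ∈ S, ∀ j ∈ S, i ≠ j →
          Finset.Icc (u i) (v i) ∩ Finset.Icc (u j) (v j) = ∅) ∧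
        m = ∑ i ∈ S, w i} (wisp k) := by
    intro k
    induction k using Nat.strong_induction_on with
    | _ k ih =>
      match k with
      | 0 =>
        intro _
        constructor
        · exact ⟨∅, by simp, by simp, by simp [hw0]⟩
        · rintro m ⟨S, hS, -, rfl⟩
          have : S = ∅ := Finset.subset_empty.1 (by simpa using hS)
          simp [this, hw0]
      | k + 1 =>
        intro hk
        have hk1 : k + 1 ∈ Finset.Icc 1 n := by
          simp only [Finset.mem_Icc]; omega
        have hplt : prec (k + 1) < k + 1 := hprec_lt _ hk1
        have IHk := ih k (by omega) (by omega)
        have IHp := ih (prec (k + 1)) (by omega) (by omega)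
        have hrec : wisp (k + 1) = max (wisp k) (wisp (prec (k + 1)) + w (k + 1)) := by
          simpa using hwrec (k + 1) hk1
        -- membership of the first candidate
        have memA : wisp k ∈ {m : ℕ | ∃ S ⊆ Finset.Icc 1 (k + 1),
            (∀ i ∈ S, ∀ j ∈ S, i ≠ j →
              Finset.Icc (u i) (v i) ∩ Finset.Icc (u j) (v j) = ∅) ∧
            m = ∑ i ∈ S, w i} := by
          obtain ⟨S, hS, hd, hsum⟩ := IHk.1
          exact ⟨S, hS.trans (Finset.Icc_subset_Icc_right (by omega)), hd, hsum⟩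
        -- membership of the second candidate
        have memB : wisp (prec (k + 1)) + w (k + 1) ∈
            {m : ℕ | ∃ S ⊆ Finset.Icc 1 (k + 1),
            (∀ i ∈ S, ∀ j ∈ S, i ≠ j →
              Finset.Icc (u i) (v i) ∩ Finset.Icc (u j) (v j) = ∅) ∧
            m = ∑ i ∈ S, w i} := by
          obtain ⟨S, hS, hd, hsum⟩ := IHp.1
          have hbound : ∀ j ∈ S, 1 ≤ j ∧ j ≤ prec (k + 1) := by
            intro j hj
            have := hS hj
            simpa [Finset.mem_Icc] using this
          have hnot : k + 1 ∉ S := by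
            intro h
            have := (hbound _ h).2
            omega
          refine ⟨insert (k + 1) S, ?_, ?_, ?_⟩
          · intro x hx
            rcases Finset.mem_insert.1 hx with rfl | hx
            · simp [Finset.mem_Icc]
            · have := (hbound _ hx)
              simp only [Finset.mem_Icc]
              omega
          · intro i hi j hj hij
            rcases Finset.mem_insert.1 hi with rfl | hi'
            · rcases Finset.mem_insert.1 hj with rfl | hj'
              · exact absurd rfl hij
              · rw [Finset.inter_comm]
                exact hdisj_le (k + 1) hk1 j (hbound _ hj').1 (hbound _ hj').2
            · rcases Finset.mem_insert.1 hj with rfl | hj'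
              · exact hdisj_le (k + 1) hk1 i (hbound _ hi').1 (hbound _ hi').2
              · exact hd i hi' j hj' hij
          · rw [Finset.sum_insert hnot, hsum]; ring
        constructor
        · rw [hrec]
          rcases max_choice (wisp k) (wisp (prec (k + 1)) + w (k + 1)) with h | h <;>
            rw [h]
          · exact memA
          · exact memB
        · rintro m ⟨S, hS, hd, rfl⟩
          rw [hrec]
          by_cases hmem : k + 1 ∈ S
          · -- erase k+1; remaining indices are ≤ prec (k+1)
            have hbound : ∀ j ∈ S.erase (k + 1), 1 ≤ j ∧ j ≤ prec (k + 1) := by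
              intro j hj
              obtain ⟨hne, hjS⟩ := Finset.mem_erase.1 hj
              have hj' : 1 ≤ j ∧ j ≤ k + 1 := by
                simpa [Finset.mem_Icc] using hS hjS
              have hjk : j < k + 1 := lt_of_le_of_ne hj'.2 hne
              by_contra hcon
              push_neg at hcon
              have hgt : prec (k + 1) < j := hcon hj'.1
              exact hprec_max (k + 1) hk1 j hgt hjk hj'.1
                (hd j hjS (k + 1) hmem hne)
            have hsub : S.erase (k + 1) ⊆ Finset.Icc 1 (prec (k + 1)) := by
              intro j hj
              simp only [Finset.mem_Icc]
              exact hbound j hj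
            have hle : ∑ i ∈ S.erase (k + 1), w i ≤ wisp (prec (k + 1)) :=
              IHp.2 ⟨S.erase (k + 1), hsub, fun i hi j hj hij =>
                hd i (Finset.mem_of_mem_erase hi) j (Finset.mem_of_mem_erase hj) hij, rfl⟩
            have hsum : ∑ i ∈ S.erase (k + 1), w i + w (k + 1) = ∑ i ∈ S, w i :=
              Finset.sum_erase_add S w hmem
            calc ∑ i ∈ S, w i = ∑ i ∈ S.erase (k + 1), w i + w (k + 1) := hsum.symm
              _ ≤ wisp (prec (k + 1)) + w (k + 1) := by omega
              _ ≤ _ := le_max_right _ _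
          · have hsub : S ⊆ Finset.Icc 1 k := by
              intro j hj
              have hj' : 1 ≤ j ∧ j ≤ k + 1 := by
                simpa [Finset.mem_Icc] using hS hj
              have : j ≠ k + 1 := fun h => hmem (h ▸ hj)
              simp only [Finset.mem_Icc]
              omega
            exact le_trans (IHk.2 ⟨S, hsub, hd, rfl⟩) (le_max_left _ _)
  exact main n le_rfl
end

section
/- Soundness of the WISP-based global lower bound: if w_{u,v} is a lower bound on the optimal cost of each sub-problem (L_{u,v}), then the maximum over all families of pairwise disjoint intervals [u,v] ⊆ [1,T] of Σ w_{u,v} is a valid lower bound on the optimal cost C of (L). -/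
namespace WispAux

/-- Cumulative sum over periods `1..t`. -/
def cum (f : ℕ → ℕ) (t : ℕ) : ℕ := ∑ r ∈ Finset.Icc 1 t, f r

lemma cum_zero (f : ℕ → ℕ) : cum f 0 = 0 := by simp [cum]

lemma cum_succ (f : ℕ → ℕ) {t : ℕ} (h : 1 ≤ t) : cum f t = cum f (t - 1) + f t := by
  obtain ⟨t', rfl⟩ : ∃ t', t = t' + 1 := ⟨t - 1, by omega⟩
  simp [cum, Finset.sum_Icc_succ_top (by omega : 1 ≤ t' + 1)]

lemma cum_mono (f : ℕ → ℕ) {a b : ℕ} (h : a ≤ b) : cum f a ≤ cum f b :=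
  Finset.sum_le_sum_of_subset (Finset.Icc_subset_Icc_right h)

/-- Clamp function: number of elements of `(a, b]` that are `≤ x`. -/
def g (a b x : ℕ) : ℕ := min x b - a

/-- Flow conservation implies `I t = cum X t - cum d t`. -/
lemma inv_eq {T : ℕ} {d ahi bhi X I : ℕ → ℕ} (hXI : Feasible T d ahi bhi X I) :
    ∀ t, t ≤ T → I t + cum d t = cum X t := by
  intro t
  induction t with
  | zero => intro _; simp [cum_zero, hXI.1]
  | succ n ih =>
    intro hn
    have h1 := (hXI.2.2 (n + 1) (Finset.mem_Icc.mpr ⟨by omega, hn⟩)).1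
    have h2 := ih (by omega)
    rw [cum_succ d (by omega : 1 ≤ n + 1), cum_succ X (by omega : 1 ≤ n + 1)]
    simp only [Nat.add_sub_cancel] at h1 ⊢
    omega

/-- The FCFS-induced sub-plan for interval `[u,v]` is feasible for `(L_{u,v})`. -/
lemma sub_feasible {T : ℕ} {d ahi bhi X I : ℕ → ℕ} (u v : ℕ)
    (h1 : 1 ≤ u) (h2 : u ≤ v) (_h3 : v ≤ T)
    (hXI : Feasible T d ahi bhi X I) :
    Feasible T (subd u v d) ahi bhi
      (fun t => g (cum d (u - 1)) (cum d v) (cum X t) - g (cum d (u - 1)) (cum d v) (cum X (t - 1)))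
      (fun t => g (cum d (u - 1)) (cum d v) (cum X t) - g (cum d (u - 1)) (cum d v) (cum d t)) := by
  have hab : cum d (u - 1) ≤ cum d v := cum_mono d (by omega)
  have hinv := inv_eq hXI
  refine ⟨?_, ?_, ?_⟩
  · simp [g, cum_zero]
  · have hT := hinv T le_rfl
    rw [hXI.2.1] at hT
    simp only [g]
    omega
  · intro t ht
    rw [Finset.mem_Icc] at ht
    have ht1 : 1 ≤ t := ht.1
    have hPD : I t + cum d t = cum X t := hinv t ht.2
    have hPD' : I (t - 1) + cum d (t - 1) = cum X (t - 1) := hinv (t - 1) (by omega)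
    have hXs : cum X t = cum X (t - 1) + X t := cum_succ X ht1
    have hds : cum d t = cum d (t - 1) + d t := cum_succ d ht1
    have hsubd : subd u v d t + g (cum d (u - 1)) (cum d v) (cum d (t - 1))
        = g (cum d (u - 1)) (cum d v) (cum d t) := by
      unfold subd g
      rcases lt_or_ge t u with h | h
      · have e1 : cum d t ≤ cum d (u - 1) := cum_mono d (by omega)
        have e2 : cum d (t - 1) ≤ cum d t := cum_mono d (by omega)
        simp only [Finset.mem_Icc]
        rw [if_neg (by omega)]
        omega
      rcases le_or_gt t v with h' | h'
      · have e1 : cum d (u - 1) ≤ cum d (t - 1) := cum_mono d (by omega)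
        have e2 : cum d t ≤ cum d v := cum_mono d (by omega)
        simp only [Finset.mem_Icc]
        rw [if_pos ⟨h, h'⟩]
        omega
      · have e1 : cum d v ≤ cum d (t - 1) := cum_mono d (by omega)
        have e2 : cum d (t - 1) ≤ cum d t := cum_mono d (by omega)
        simp only [Finset.mem_Icc]
        rw [if_neg (by omega)]
        omega
    have hother := (hXI.2.2 t (Finset.mem_Icc.mpr ht)).2
    refine ⟨?_, ?_, ?_⟩
    · -- flow conservation
      have m1 : g (cum d (u - 1)) (cum d v) (cum d (t - 1))
          ≤ g (cum d (u - 1)) (cum d v) (cum X (t - 1)) := by unfold g; omega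
      have m2 : g (cum d (u - 1)) (cum d v) (cum X (t - 1))
          ≤ g (cum d (u - 1)) (cum d v) (cum X t) := by unfold g; omega
      have m3 : g (cum d (u - 1)) (cum d v) (cum d t)
          ≤ g (cum d (u - 1)) (cum d v) (cum X t) := by unfold g; omega
      simp only []
      omega
    · have hlip : g (cum d (u - 1)) (cum d v) (cum X t)
          - g (cum d (u - 1)) (cum d v) (cum X (t - 1)) ≤ X t := by unfold g; omega
      simp only []
      omega
    · have hlip : g (cum d (u - 1)) (cum d v) (cum X t)
          - g (cum d (u - 1)) (cum d v) (cum d t) ≤ I t := by unfold g; omega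
      simp only []
      omega

lemma g_sub_eq_card {a b x y : ℕ} (hab : a ≤ b) (hyx : y ≤ x) :
    g a b x - g a b y = ((Finset.Ioc y x) ∩ (Finset.Ioc a b)).card := by
  have hIoc : Finset.Ioc y x ∩ Finset.Ioc a b = Finset.Ioc (max y a) (min x b) := by
    ext k
    simp only [Finset.mem_inter, Finset.mem_Ioc]
    omega
  rw [hIoc, Nat.card_Ioc]
  unfold g
  omega

lemma sum_card_inter_le {ι : Type*} [DecidableEq ι] (F : Finset ι) {α : Type*} [DecidableEq α]
    (S : Finset α) (Tset : ι → Finset α)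
    (hd : ∀ i ∈ F, ∀ j ∈ F, i ≠ j → Disjoint (Tset i) (Tset j)) :
    ∑ i ∈ F, (S ∩ Tset i).card ≤ S.card := by
  have hd' : ∀ i ∈ F, ∀ j ∈ F, i ≠ j → Disjoint (S ∩ Tset i) (S ∩ Tset j) := fun i hi j hj hij =>
    (hd i hi j hj hij).mono Finset.inter_subset_right Finset.inter_subset_right
  rw [← Finset.card_biUnion hd']
  exact Finset.card_le_card (Finset.biUnion_subset.mpr fun i _ => Finset.inter_subset_left)

/-- Key disjointness bound: summed clamp-differences over disjoint intervals. -/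
lemma sum_g_sub_le (F : Finset (ℕ × ℕ)) (D : ℕ → ℕ) (hDmono : ∀ {a b : ℕ}, a ≤ b → D a ≤ D b)
    (hF : ∀ i ∈ F, 1 ≤ i.1 ∧ i.1 < i.2)
    (hdisj : ∀ i ∈ F, ∀ j ∈ F, i ≠ j →
      Finset.Icc i.1 i.2 ∩ Finset.Icc j.1 j.2 = ∅)
    {x y : ℕ} (hyx : y ≤ x) :
    ∑ i ∈ F, (g (D (i.1 - 1)) (D i.2) x - g (D (i.1 - 1)) (D i.2) y) ≤ x - y := by
  have hcard : ∀ i ∈ F, g (D (i.1 - 1)) (D i.2) x - g (D (i.1 - 1)) (D i.2) y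
      = ((Finset.Ioc y x) ∩ (Finset.Ioc (D (i.1 - 1)) (D i.2))).card := by
    intro i hi
    exact g_sub_eq_card (hDmono (by have := hF i hi; omega)) hyx
  rw [Finset.sum_congr rfl hcard]
  have hb := sum_card_inter_le F (Finset.Ioc y x)
    (fun i => Finset.Ioc (D (i.1 - 1)) (D i.2)) ?_
  · simpa [Nat.card_Ioc] using hb
  · intro i hi j hj hij
    have h1 := hF i hi
    have h2 := hF j hj
    have hvu : i.2 < j.1 ∨ j.2 < i.1 := by
      by_contra hc
      push_neg at hc
      have hmem : max i.1 j.1 ∈ Finset.Icc i.1 i.2 ∩ Finset.Icc j.1 j.2 := by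
        simp only [Finset.mem_inter, Finset.mem_Icc]
        omega
      rw [hdisj i hi j hj hij] at hmem
      simp at hmem
    rw [Finset.disjoint_left]
    intro k hk1 hk2
    simp only [Finset.mem_Ioc] at hk1 hk2
    rcases hvu with hh | hh
    · have : D i.2 ≤ D (j.1 - 1) := hDmono (by omega)
      omega
    · have : D j.2 ≤ D (i.1 - 1) := hDmono (by omega)
      omega

end WispAux

open WispAux

/-- Soundness of the WISP-based global lower bound: if `w u v` is a lower bound
on the optimal cost of each sub-problem `(L_{u,v})`, then for every family `F`
of pairwise disjoint intervals `[u,v] ⊆ [1,T]` the sum `Σ_{(u,v) ∈ F} w u v` is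
a lower bound on the cost of any feasible plan of `(L)` — hence the maximum of
these sums over all such families is a valid lower bound on the optimal cost. -/
theorem wisp_global_lower_bound_sound
    (T : ℕ) (d p h s ahi bhi : ℕ → ℕ) (w : ℕ → ℕ → ℕ)
    (hw : ∀ u' v' : ℕ, 1 ≤ u' → u' < v' → v' ≤ T →
      ∀ X' I' : ℕ → ℕ, Feasible T (subd u' v' d) ahi bhi X' I' →
        w u' v' ≤ planCost T p h (subs u' v' s) X' I')
    (F : Finset (ℕ × ℕ))
    (hF : ∀ i ∈ F, 1 ≤ i.1 ∧ i.1 < i.2 ∧ i.2 ≤ T)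
    (hdisj : ∀ i ∈ F, ∀ j ∈ F, i ≠ j →
      Finset.Icc i.1 i.2 ∩ Finset.Icc j.1 j.2 = ∅)
    (X I : ℕ → ℕ) (hXI : Feasible T d ahi bhi X I) :
    ∑ i ∈ F, w i.1 i.2 ≤ planCost T p h s X I := by
  classical
  have key : ∀ i ∈ F, w i.1 i.2 ≤ planCost T p h (subs i.1 i.2 s)
      (fun t => g (cum d (i.1 - 1)) (cum d i.2) (cum X t)
        - g (cum d (i.1 - 1)) (cum d i.2) (cum X (t - 1)))
      (fun t => g (cum d (i.1 - 1)) (cum d i.2) (cum X t)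
        - g (cum d (i.1 - 1)) (cum d i.2) (cum d t)) := by
    intro i hi
    obtain ⟨hu, huv, hv⟩ := hF i hi
    exact hw i.1 i.2 hu huv hv _ _ (sub_feasible i.1 i.2 hu (le_of_lt huv) hv hXI)
  refine le_trans (Finset.sum_le_sum key) ?_
  unfold planCost
  rw [Finset.sum_comm]
  refine Finset.sum_le_sum ?_
  intro t ht
  rw [Finset.mem_Icc] at ht
  have hinv := inv_eq hXI
  have hPD : I t + cum d t = cum X t := hinv t ht.2
  have hXs : cum X t = cum X (t - 1) + X t := cum_succ X ht.1
  -- three parts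
  have hpart1 : ∑ i ∈ F, (g (cum d (i.1 - 1)) (cum d i.2) (cum X t)
      - g (cum d (i.1 - 1)) (cum d i.2) (cum X (t - 1))) ≤ X t := by
    have := sum_g_sub_le F (cum d) (fun hab => cum_mono d hab)
      (fun i hi => ⟨(hF i hi).1, (hF i hi).2.1⟩) hdisj (x := cum X t) (y := cum X (t - 1))
      (by omega)
    omega
  have hpart2 : ∑ i ∈ F, (g (cum d (i.1 - 1)) (cum d i.2) (cum X t)
      - g (cum d (i.1 - 1)) (cum d i.2) (cum d t)) ≤ I t := by
    have := sum_g_sub_le F (cum d) (fun hab => cum_mono d hab)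
      (fun i hi => ⟨(hF i hi).1, (hF i hi).2.1⟩) hdisj (x := cum X t) (y := cum d t)
      (by omega)
    omega
  have hpart3 : ∑ i ∈ F, (if 0 < g (cum d (i.1 - 1)) (cum d i.2) (cum X t)
      - g (cum d (i.1 - 1)) (cum d i.2) (cum X (t - 1)) then subs i.1 i.2 s t else 0)
      ≤ if 0 < X t then s t else 0 := by
    rcases Nat.eq_zero_or_pos (X t) with hx | hx
    · rw [Finset.sum_eq_zero]
      · simp
      · intro i hi
        have hz : g (cum d (i.1 - 1)) (cum d i.2) (cum X t)
            - g (cum d (i.1 - 1)) (cum d i.2) (cum X (t - 1)) = 0 := by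
          unfold g; omega
        simp [hz]
    · rw [if_pos hx]
      calc ∑ i ∈ F, (if 0 < g (cum d (i.1 - 1)) (cum d i.2) (cum X t)
              - g (cum d (i.1 - 1)) (cum d i.2) (cum X (t - 1)) then subs i.1 i.2 s t else 0)
          ≤ ∑ i ∈ F, (if t ∈ Finset.Icc i.1 i.2 then s t else 0) := by
            refine Finset.sum_le_sum ?_
            intro i hi
            by_cases h1 : 0 < g (cum d (i.1 - 1)) (cum d i.2) (cum X t)
                - g (cum d (i.1 - 1)) (cum d i.2) (cum X (t - 1))
            · simp [h1, subs]
            · simp [h1]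
        _ = ∑ i ∈ F.filter (fun i => t ∈ Finset.Icc i.1 i.2), s t :=
            (Finset.sum_filter _ _).symm
        _ = (F.filter (fun i => t ∈ Finset.Icc i.1 i.2)).card * s t := by
            rw [Finset.sum_const, smul_eq_mul]
        _ ≤ 1 * s t := by
            refine Nat.mul_le_mul_right _ ?_
            rw [Finset.card_le_one]
            intro a ha b hb
            rw [Finset.mem_filter] at ha hb
            by_contra hne
            have hmem : t ∈ Finset.Icc a.1 a.2 ∩ Finset.Icc b.1 b.2 :=
              Finset.mem_inter.mpr ⟨ha.2, hb.2⟩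
            rw [hdisj a ha.1 b hb.1 hne] at hmem
            simp at hmem
        _ = s t := one_mul _
  calc ∑ i ∈ F, (p t * (g (cum d (i.1 - 1)) (cum d i.2) (cum X t)
          - g (cum d (i.1 - 1)) (cum d i.2) (cum X (t - 1)))
        + h t * (g (cum d (i.1 - 1)) (cum d i.2) (cum X t)
          - g (cum d (i.1 - 1)) (cum d i.2) (cum d t))
        + if 0 < g (cum d (i.1 - 1)) (cum d i.2) (cum X t)
            - g (cum d (i.1 - 1)) (cum d i.2) (cum X (t - 1)) then subs i.1 i.2 s t else 0)
      = (∑ i ∈ F, p t * (g (cum d (i.1 - 1)) (cum d i.2) (cum X t)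
          - g (cum d (i.1 - 1)) (cum d i.2) (cum X (t - 1))))
        + (∑ i ∈ F, h t * (g (cum d (i.1 - 1)) (cum d i.2) (cum X t)
          - g (cum d (i.1 - 1)) (cum d i.2) (cum d t)))
        + ∑ i ∈ F, (if 0 < g (cum d (i.1 - 1)) (cum d i.2) (cum X t)
            - g (cum d (i.1 - 1)) (cum d i.2) (cum X (t - 1)) then subs i.1 i.2 s t else 0) := by
        rw [Finset.sum_add_distrib, Finset.sum_add_distrib]
    _ ≤ p t * X t + h t * I t + (if 0 < X t then s t else 0) := by
        refine add_le_add (add_le_add ?_ ?_) hpart3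
        · rw [← Finset.mul_sum]
          exact Nat.mul_le_mul_left _ hpart1
        · rw [← Finset.mul_sum]
          exact Nat.mul_le_mul_left _ hpart2
end

section
/- Soundness of the production-variable DP filtering rule: for any t and inventory values i_{t-1}, i_t in the respective domains, if f(t−1, i_{t-1}) + cost(t, i_{t-1}, i_t) + f_r(t, i_t) > C̅, where cost(t, i_{t-1}, i_t) = s_t·[x>0] + p_t x + h_t i_t and x = d_t + i_t − i_{t-1}, then no feasible solution of (L) with total cost at most C̅ has simultaneously I_{t-1} = i_{t-1} and I_t = i_t (hence X_t = x via that pair). -/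
/-- `f(t, i)`: exact minimum cost over periods `1..t` of satisfying demands
`d_1..d_t` with ending inventory `i` (infimum in `ℕ∞`). -/
noncomputable def fwdCost (d p h s ahi bhi : ℕ → ℕ) (t i : ℕ) : ℕ∞ :=
  sInf {c : ℕ∞ | ∃ X I : ℕ → ℕ, I 0 = 0 ∧ I t = i ∧
    (∀ r ∈ Finset.Icc 1 t, I (r - 1) + X r = d r + I r ∧ X r ≤ ahi r ∧ I r ≤ bhi r) ∧
    c = ((∑ r ∈ Finset.Icc 1 t,
      (p r * X r + h r * I r + if 0 < X r then s r else 0) : ℕ) : ℕ∞)}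

/-- `f_r(t, i)`: exact minimum cost over periods `t+1..T` of satisfying demands
`d_{t+1}..d_T` with starting inventory `i` and `I T = 0`. -/
noncomputable def bwdCost (T : ℕ) (d p h s ahi bhi : ℕ → ℕ) (t i : ℕ) : ℕ∞ :=
  sInf {c : ℕ∞ | ∃ X I : ℕ → ℕ, I t = i ∧ I T = 0 ∧
    (∀ r ∈ Finset.Icc (t + 1) T, I (r - 1) + X r = d r + I r ∧ X r ≤ ahi r ∧ I r ≤ bhi r) ∧
    c = ((∑ r ∈ Finset.Icc (t + 1) T,
      (p r * X r + h r * I r + if 0 < X r then s r else 0) : ℕ) : ℕ∞)}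

/-- Soundness of the DP filtering rule for the production variables: if
`f(t-1, i₁) + cost(t, i₁, i₂) + f_r(t, i₂) > C̅`, where
`cost(t, i₁, i₂) = s_t·[x>0] + p_t x + h_t i₂` and `x = d_t + i₂ - i₁`, then no
feasible solution of `(L)` with total cost at most `C̅` has simultaneously
`I_{t-1} = i₁` and `I_t = i₂` (hence `X_t = x` via that pair). -/
theorem dp_filtering_X_sound
    (T : ℕ) (d p h s ahi bhi : ℕ → ℕ)
    (t : ℕ) (ht : t ∈ Finset.Icc 1 T) (i₁ i₂ Cbar : ℕ)
    (hcut : (Cbar : ℕ∞) <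
      fwdCost d p h s ahi bhi (t - 1) i₁ +
        (((if 0 < d t + i₂ - i₁ then s t else 0) +
            p t * (d t + i₂ - i₁) + h t * i₂ : ℕ) : ℕ∞) +
        bwdCost T d p h s ahi bhi t i₂) :
    ¬ ∃ X I : ℕ → ℕ, Feasible T d ahi bhi X I ∧
      I (t - 1) = i₁ ∧ I t = i₂ ∧ planCost T p h s X I ≤ Cbar := by
  rintro ⟨X, I, ⟨hI0, hIT, hfeas⟩, hI1, hI2, hcost⟩
  simp only [Finset.mem_Icc] at ht
  obtain ⟨ht1, ht2⟩ := ht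
  set g : ℕ → ℕ := fun r => p r * X r + h r * I r + if 0 < X r then s r else 0 with hg
  obtain ⟨hbal, -, -⟩ := hfeas t (Finset.mem_Icc.mpr ⟨ht1, ht2⟩)
  have hx : X t = d t + i₂ - i₁ := by omega
  have hfwd : fwdCost d p h s ahi bhi (t - 1) i₁
      ≤ ((∑ r ∈ Finset.Icc 1 (t - 1), g r : ℕ) : ℕ∞) := by
    apply sInf_le
    exact ⟨X, I, hI0, hI1, fun r hr => hfeas r (Finset.mem_Icc.mpr
      ⟨(Finset.mem_Icc.mp hr).1, by have := (Finset.mem_Icc.mp hr).2; omega⟩), rfl⟩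
  have hbwd : bwdCost T d p h s ahi bhi t i₂
      ≤ ((∑ r ∈ Finset.Icc (t + 1) T, g r : ℕ) : ℕ∞) := by
    apply sInf_le
    exact ⟨X, I, hI2, hIT, fun r hr => hfeas r (Finset.mem_Icc.mpr
      ⟨by have := (Finset.mem_Icc.mp hr).1; omega, (Finset.mem_Icc.mp hr).2⟩), rfl⟩
  have hmid : (if 0 < d t + i₂ - i₁ then s t else 0)
      + p t * (d t + i₂ - i₁) + h t * i₂ = g t := by
    rw [hg]; simp only [← hx, hI2]; ring
  have hsplit : planCost T p h s X I
      = ∑ r ∈ Finset.Icc 1 (t - 1), g r + g t + ∑ r ∈ Finset.Icc (t + 1) T, g r := by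
    have e1 : Finset.Icc 1 T = Finset.Ioc 0 T := rfl
    have e2 : Finset.Icc (t + 1) T = Finset.Ioc t T := Finset.Icc_add_one_left_eq_Ioc t T
    have e3 : Finset.Icc 1 (t - 1) = Finset.Ioc 0 (t - 1) := rfl
    rw [planCost, e1, e2, e3,
      ← Finset.sum_Ioc_consecutive g (Nat.zero_le t) ht2]
    have : t = (t - 1) + 1 := by omega
    rw [this, Finset.sum_Ioc_succ_top (Nat.zero_le _)]
    rw [← this]
  have hle : fwdCost d p h s ahi bhi (t - 1) i₁ +
      (((if 0 < d t + i₂ - i₁ then s t else 0) +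
          p t * (d t + i₂ - i₁) + h t * i₂ : ℕ) : ℕ∞) +
      bwdCost T d p h s ahi bhi t i₂ ≤ (Cbar : ℕ∞) := by
    calc _ ≤ ((∑ r ∈ Finset.Icc 1 (t - 1), g r : ℕ) : ℕ∞) +
        (((if 0 < d t + i₂ - i₁ then s t else 0) +
            p t * (d t + i₂ - i₁) + h t * i₂ : ℕ) : ℕ∞) +
        ((∑ r ∈ Finset.Icc (t + 1) T, g r : ℕ) : ℕ∞) :=
          add_le_add (add_le_add hfwd le_rfl) hbwd
      _ = ((planCost T p h s X I : ℕ) : ℕ∞) := by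
          rw [hmid, hsplit]; push_cast; ring
      _ ≤ (Cbar : ℕ∞) := by exact_mod_cast hcost
  exact absurd hle (not_le.mpr hcut)
end
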